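/- arXiv:1710.06273 — 11 statements merged into one kernel-verified Lean document; each statement's English description precedes it below -/
import Mathlib

section
/- Let Θ_∞(w) = inf{ Σ_{S⊆V} α_S F(S) : α_S ≥ 0 for all S ⊆ V, Σ_{S⊆V} α_S = 1, Σ_{S : i∈S} α_S ≥ |w_i| for all i ∈ V }. Then Θ_∞ is the convex envelope of w ↦ F(supp(w)) over the unit ℓ_∞-ball B = {w ∈ ℝ^V : ‖w‖_∞ ≤ 1}; precisely: (i) Θ_∞ is convex on B; (ii) Θ_∞(w) ≤ F(supp(w)) for every w ∈ B; (iii) every function g : ℝ^V → ℝ that is convex on B and satisfies g(w) ≤ F(supp(w)) for all w ∈ B also satisfies g(w) ≤ Θ_∞(w) for all w ∈ B. -/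
open scoped BigOperators

/-- Support of a vector as a finset. -/
noncomputable def vsupp {V : Type*} [Fintype V] (w : V → ℝ) : Finset V :=
  Finset.univ.filter (fun i => w i ≠ 0)

/-- The non-homogeneous `ℓ∞`-relaxation `Θ_∞`. -/
noncomputable def thetaInf {V : Type*} [Fintype V] [DecidableEq V] (F : Finset V → ℝ) (w : V → ℝ) : ℝ :=
  sInf { t : ℝ | ∃ α : Finset V → ℝ,
    (∀ S, 0 ≤ α S) ∧ (∑ S : Finset V, α S) = 1 ∧
    (∀ i : V, |w i| ≤ ∑ S : Finset V, if i ∈ S then α S else 0) ∧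
    t = ∑ S : Finset V, α S * F S }

/-!
A probability vector `α` on `2^V` whose coverage `c i = Σ_{S ∋ i} α S` dominates `|w i|` writes `w`
as the convex combination `Σ_S α S • v_S`, where `v_S` is `w i / c i` on `S` and `0` off `S`.
Each `v_S` lies in the unit ball and has support in `S`, so it is the midpoint of two points of
the ball with support exactly `S`; hence any convex minorant `g` of `F ∘ supp` satisfies
`g v_S ≤ F S`, and Jensen gives `g w ≤ Σ_S α S F S`. Convexity of `Θ_∞` comes from mixing
feasible `α`'s, and `Θ_∞ w ≤ F (supp w)` from the point mass at `supp w`.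
-/

open Finset Metric
open scoped Pointwise

section

variable {V : Type*} [Fintype V]

lemma mem_closedBall_zero_one_iff {w : V → ℝ} :
    w ∈ closedBall (0 : V → ℝ) 1 ↔ ∀ i, |w i| ≤ 1 := by
  simp [pi_norm_le_iff_of_nonneg, Real.norm_eq_abs]

def cost (F : Finset V → ℝ) (α : Finset V → ℝ) : ℝ :=
  ∑ S, α S * F S

lemma cost_smul_add_smul (F : Finset V → ℝ) (a b : ℝ) (α β : Finset V → ℝ) :
    cost F (a • α + b • β) = a * cost F α + b * cost F β := by
  simp only [cost, mul_sum, ← sum_add_distrib, Pi.add_apply, Pi.smul_apply, smul_eq_mul]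
  exact sum_congr rfl fun S _ => by ring

lemma mem_vsupp {w : V → ℝ} {i : V} : i ∈ vsupp w ↔ w i ≠ 0 := by
  simp [vsupp]

variable [DecidableEq V]

def coverage (α : Finset V → ℝ) (i : V) : ℝ :=
  ∑ S, if i ∈ S then α S else 0

structure IsFractionalCover (w : V → ℝ) (α : Finset V → ℝ) : Prop where
  nonneg : ∀ S, 0 ≤ α S
  sum_eq_one : ∑ S, α S = 1
  abs_le_coverage : ∀ i, |w i| ≤ coverage α i

lemma coverage_smul_add_smul (a b : ℝ) (α β : Finset V → ℝ) (i : V) :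
    coverage (a • α + b • β) i = a * coverage α i + b * coverage β i := by
  simp only [coverage, mul_sum, ← sum_add_distrib]
  refine sum_congr rfl fun S _ => ?_
  split_ifs <;> simp

namespace IsFractionalCover

variable {w x y : V → ℝ} {α β : Finset V → ℝ}

lemma inf'_le_cost (hα : IsFractionalCover w α) (F : Finset V → ℝ) :
    univ.inf' univ_nonempty F ≤ cost F α := by
  calc univ.inf' univ_nonempty F = ∑ S, α S * univ.inf' univ_nonempty F := by
        rw [← sum_mul, hα.sum_eq_one, one_mul]
    _ ≤ cost F α := sum_le_sum fun S hS =>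
        mul_le_mul_of_nonneg_left (inf'_le F hS) (hα.nonneg S)

lemma smul_add_smul (hα : IsFractionalCover x α) (hβ : IsFractionalCover y β) {a b : ℝ}
    (ha : 0 ≤ a) (hb : 0 ≤ b) (hab : a + b = 1) :
    IsFractionalCover (a • x + b • y) (a • α + b • β) where
  nonneg S := add_nonneg (mul_nonneg ha (hα.nonneg S)) (mul_nonneg hb (hβ.nonneg S))
  sum_eq_one := by
    simp only [Pi.add_apply, Pi.smul_apply, smul_eq_mul, sum_add_distrib, ← mul_sum,
      hα.sum_eq_one, hβ.sum_eq_one, mul_one, hab]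
  abs_le_coverage i := by
    rw [coverage_smul_add_smul]
    calc |a * x i + b * y i| ≤ a * |x i| + b * |y i| := by
          simpa [abs_mul, abs_of_nonneg ha, abs_of_nonneg hb] using abs_add_le (a * x i) (b * y i)
      _ ≤ a * coverage α i + b * coverage β i := by
          gcongr
          exacts [hα.abs_le_coverage i, hβ.abs_le_coverage i]

end IsFractionalCover

lemma coverage_single (A : Finset V) (i : V) :
    coverage (Pi.single A 1) i = if i ∈ A then 1 else 0 := by
  rw [coverage, sum_eq_single A (fun S _ hS => by simp [hS]) (by simp)]
  simp

lemma isFractionalCover_single_vsupp {w : V → ℝ} (hw : w ∈ closedBall 0 1) :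
    IsFractionalCover w (Pi.single (vsupp w) 1) where
  nonneg S := by by_cases h : S = vsupp w <;> simp [h]
  sum_eq_one := by simp
  abs_le_coverage i := by
    rw [coverage_single]
    by_cases hi : w i = 0
    · simp [hi, vsupp]
    · simpa [vsupp, hi] using mem_closedBall_zero_one_iff.1 hw i

lemma cost_single (F : Finset V → ℝ) (A : Finset V) : cost F (Pi.single A 1) = F A := by
  simp [cost, Pi.single_apply]

def feasibleCosts (F : Finset V → ℝ) (w : V → ℝ) : Set ℝ :=
  cost F '' {α | IsFractionalCover w α}

lemma thetaInf_eq_sInf_feasibleCosts (F : Finset V → ℝ) (w : V → ℝ) :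
    thetaInf F w = sInf (feasibleCosts F w) := by
  unfold thetaInf feasibleCosts
  congr 1
  ext t
  constructor
  · rintro ⟨α, h0, h1, hc, rfl⟩
    exact ⟨α, ⟨h0, h1, hc⟩, rfl⟩
  · rintro ⟨α, ⟨h0, h1, hc⟩, rfl⟩
    exact ⟨α, h0, h1, hc, rfl⟩

lemma bddBelow_feasibleCosts (F : Finset V → ℝ) (w : V → ℝ) : BddBelow (feasibleCosts F w) :=
  ⟨_, by rintro _ ⟨α, hα, rfl⟩; exact hα.inf'_le_cost F⟩

lemma nonempty_feasibleCosts (F : Finset V → ℝ) {w : V → ℝ} (hw : w ∈ closedBall 0 1) :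
    (feasibleCosts F w).Nonempty :=
  ⟨_, _, isFractionalCover_single_vsupp hw, rfl⟩

lemma thetaInf_le_vsupp (F : Finset V → ℝ) {w : V → ℝ} (hw : w ∈ closedBall 0 1) :
    thetaInf F w ≤ F (vsupp w) := by
  rw [thetaInf_eq_sInf_feasibleCosts, ← cost_single F (vsupp w)]
  exact csInf_le (bddBelow_feasibleCosts F w) ⟨_, isFractionalCover_single_vsupp hw, rfl⟩

lemma convexOn_thetaInf (F : Finset V → ℝ) : ConvexOn ℝ (closedBall 0 1) (thetaInf F) := by
  refine ⟨convex_closedBall 0 1, fun x hx y hy a b ha hb hab => ?_⟩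
  have hsub : a • feasibleCosts F x + b • feasibleCosts F y ⊆ feasibleCosts F (a • x + b • y) := by
    rintro _ ⟨_, ⟨_, ⟨α, hα, rfl⟩, rfl⟩, _, ⟨_, ⟨β, hβ, rfl⟩, rfl⟩, rfl⟩
    exact ⟨_, hα.smul_add_smul hβ ha hb hab, cost_smul_add_smul F a b α β⟩
  have hx' := nonempty_feasibleCosts F hx
  have hy' := nonempty_feasibleCosts F hy
  calc thetaInf F (a • x + b • y) ≤ sInf (a • feasibleCosts F x + b • feasibleCosts F y) := by
        rw [thetaInf_eq_sInf_feasibleCosts]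
        exact csInf_le_csInf (bddBelow_feasibleCosts F _) ((hx'.smul_set).add hy'.smul_set) hsub
    _ = a • thetaInf F x + b • thetaInf F y := by
        rw [csInf_add hx'.smul_set ((bddBelow_feasibleCosts F x).smul_of_nonneg ha) hy'.smul_set
          ((bddBelow_feasibleCosts F y).smul_of_nonneg hb), Real.sInf_smul_of_nonneg ha,
          Real.sInf_smul_of_nonneg hb, thetaInf_eq_sInf_feasibleCosts, thetaInf_eq_sInf_feasibleCosts]

variable {F : Finset V → ℝ} {g : (V → ℝ) → ℝ}

lemma ConvexOn.le_of_vsupp_subset (hg : ConvexOn ℝ (closedBall 0 1) g)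
    (hgF : ∀ w ∈ closedBall 0 1, g w ≤ F (vsupp w)) {v : V → ℝ} (hv : v ∈ closedBall 0 1)
    {S : Finset V} (hvS : vsupp v ⊆ S) : g v ≤ F S := by
  let fill (t : ℝ) : V → ℝ := fun i => if i ∈ S \ vsupp v then t else v i
  have hv_zero : ∀ i ∉ vsupp v, v i = 0 := fun i hi => not_not.1 (mt mem_vsupp.2 hi)
  have fill_mem : ∀ t, |t| ≤ 1 → fill t ∈ closedBall 0 1 := fun t ht =>
    mem_closedBall_zero_one_iff.2 fun i => by
      unfold fill; split_ifs
      exacts [ht, mem_closedBall_zero_one_iff.1 hv i]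
  have vsupp_fill : ∀ t, t ≠ 0 → vsupp (fill t) = S := fun t ht => by
    ext i
    rw [mem_vsupp]
    by_cases hi : i ∈ vsupp v
    · simp only [fill, if_neg fun h => (mem_sdiff.1 h).2 hi]
      exact iff_of_true (mem_vsupp.1 hi) (hvS hi)
    · by_cases hiS : i ∈ S
      · simp only [fill, if_pos (mem_sdiff.2 ⟨hiS, hi⟩)]
        exact iff_of_true ht hiS
      · simp only [fill, if_neg fun h => hiS (mem_sdiff.1 h).1, hv_zero i hi]
        exact iff_of_false (by simp) hiS
  have hmid : v = (1 / 2 : ℝ) • fill 1 + (1 / 2 : ℝ) • fill (-1) := by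
    ext i
    by_cases hi : i ∈ S \ vsupp v
    all_goals simp only [fill, Pi.add_apply, Pi.smul_apply, smul_eq_mul, if_pos, if_neg, hi,
      not_false_eq_true]
    · rw [hv_zero i (mem_sdiff.1 hi).2]; ring
    · ring
  calc g v = g ((1 / 2 : ℝ) • fill 1 + (1 / 2 : ℝ) • fill (-1)) := congrArg g hmid
    _ ≤ (1 / 2 : ℝ) • g (fill 1) + (1 / 2 : ℝ) • g (fill (-1)) :=
        hg.2 (fill_mem 1 (by simp)) (fill_mem (-1) (by simp)) (by norm_num) (by norm_num)
          (by norm_num)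
    _ ≤ (1 / 2 : ℝ) • F S + (1 / 2 : ℝ) • F S := by
        gcongr
        · simpa [vsupp_fill] using hgF _ (fill_mem 1 (by simp))
        · simpa [vsupp_fill] using hgF _ (fill_mem (-1) (by simp))
    _ = F S := by simp only [smul_eq_mul]; ring

lemma ConvexOn.le_cost (hg : ConvexOn ℝ (closedBall 0 1) g)
    (hgF : ∀ w ∈ closedBall 0 1, g w ≤ F (vsupp w)) {w : V → ℝ} {α : Finset V → ℝ}
    (hα : IsFractionalCover w α) : g w ≤ cost F α := by
  set c := coverage α
  let v (S : Finset V) : V → ℝ := fun i => if i ∈ S then w i / c i else 0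
  have hc_nonneg i : 0 ≤ c i := (abs_nonneg _).trans (hα.abs_le_coverage i)
  have hv_mem S : v S ∈ closedBall 0 1 := mem_closedBall_zero_one_iff.2 fun i => by
    unfold v; split_ifs
    · rw [abs_div, abs_of_nonneg (hc_nonneg i)]
      exact div_le_one_of_le₀ (hα.abs_le_coverage i) (hc_nonneg i)
    · simp
  have hv_vsupp S : vsupp (v S) ⊆ S := fun i hi => by
    by_contra hiS
    exact mem_vsupp.1 hi (if_neg hiS)
  have hw : ∑ S, α S • v S = w := by
    ext i
    have : c i * (w i / c i) = w i := by
      rcases (hc_nonneg i).eq_or_lt with hc | hc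
      · simpa [← hc] using (abs_nonpos_iff.1 (hc ▸ hα.abs_le_coverage i)).symm
      · field_simp
    simpa [v, c, coverage, sum_mul, mul_ite, ite_mul] using this
  calc g w = g (∑ S, α S • v S) := by rw [hw]
    _ ≤ ∑ S, α S • g (v S) :=
        hg.map_sum_le (fun S _ => hα.nonneg S) hα.sum_eq_one fun S _ => hv_mem S
    _ ≤ cost F α := sum_le_sum fun S _ =>
        mul_le_mul_of_nonneg_left (hg.le_of_vsupp_subset hgF (hv_mem S) (hv_vsupp S)) (hα.nonneg S)

lemma ConvexOn.le_thetaInf (hg : ConvexOn ℝ (closedBall 0 1) g)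
    (hgF : ∀ w ∈ closedBall 0 1, g w ≤ F (vsupp w)) {w : V → ℝ} (hw : w ∈ closedBall 0 1) :
    g w ≤ thetaInf F w := by
  rw [thetaInf_eq_sInf_feasibleCosts]
  exact le_csInf (nonempty_feasibleCosts F hw) fun _ ⟨α, hα, hαt⟩ => hαt ▸ hg.le_cost hgF hα

end

theorem stmt_0_general {V : Type*} [Fintype V] [DecidableEq V]
    (F : Finset V → ℝ)
    (B : Set (V → ℝ)) (hB : B = { w : V → ℝ | ∀ i, |w i| ≤ 1 }) :
    ConvexOn ℝ B (thetaInf F) ∧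
    (∀ w ∈ B, thetaInf F w ≤ F (vsupp w)) ∧
    (∀ g : (V → ℝ) → ℝ, ConvexOn ℝ B g → (∀ w ∈ B, g w ≤ F (vsupp w)) →
      ∀ w ∈ B, g w ≤ thetaInf F w) := by
  obtain rfl : B = closedBall 0 1 := hB.trans (Set.ext fun _ => mem_closedBall_zero_one_iff.symm)
  exact ⟨convexOn_thetaInf F, fun w => thetaInf_le_vsupp F,
    fun g hg hgF w => hg.le_thetaInf hgF⟩

theorem stmt_0 {V : Type*} [Fintype V] [DecidableEq V]
    (F : Finset V → ℝ) (hF0 : F ∅ = 0) (hFpos : ∀ A : Finset V, A.Nonempty → 0 < F A)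
    (B : Set (V → ℝ)) (hB : B = { w : V → ℝ | ∀ i, |w i| ≤ 1 }) :
    ConvexOn ℝ B (thetaInf F) ∧
    (∀ w ∈ B, thetaInf F w ≤ F (vsupp w)) ∧
    (∀ g : (V → ℝ) → ℝ, ConvexOn ℝ B g → (∀ w ∈ B, g w ≤ F (vsupp w)) →
      ∀ w ∈ B, g w ≤ thetaInf F w) :=
  stmt_0_general F B hB
end

section
/- Let F : 2^V → [0,∞] with F(∅) = 0, and for w ∈ ℝ^V define Θ_∞(w) = inf{ Σ_{S⊆V} α_S F(S) : α_S ≥ 0 for all S ⊆ V, Σ_{S⊆V} α_S = 1, Σ_{S : i∈S} α_S ≥ |w_i| for all i ∈ V } (an infimum in [0,∞]). Then the non-homogeneous lower combinatorial envelope equals the monotonization of F: for every A ⊆ V, Θ_∞(1_A) = min{ F(S) : A ⊆ S ⊆ V }. -/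
open scoped BigOperators ENNReal

/-- The non-homogeneous `ℓ∞`-relaxation `Θ_∞` with values in `[0,∞]`. -/
noncomputable def thetaInfE {V : Type*} [Fintype V] [DecidableEq V]
    (F : Finset V → ℝ≥0∞) (w : V → ℝ) : ℝ≥0∞ :=
  sInf { t : ℝ≥0∞ | ∃ α : Finset V → ℝ,
    (∀ S, 0 ≤ α S) ∧ (∑ S : Finset V, α S) = 1 ∧
    (∀ i : V, |w i| ≤ ∑ S : Finset V, if i ∈ S then α S else 0) ∧
    t = ∑ S : Finset V, ENNReal.ofReal (α S) * F S }

/-!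
The Dirac mass at any `S ⊇ A` is feasible for `1_A`, which gives `Θ_∞(1_A) ≤ F S`. Conversely,
for `i ∈ A` the covering constraint `1 ≤ ∑_{S ∋ i} α_S` together with `∑_S α_S = 1` forces `α`
to vanish on every `S ∌ i`; so a feasible `α` is a probability vector supported on supersets
of `A`, and its `α`-average of `F` is at least the minimum of `F` over them.
-/

open Finset

theorem Finset.eq_zero_of_sum_le_sum_filter {ι M : Type*} [AddCommMonoid M] [PartialOrder M]
    [IsOrderedCancelAddMonoid M] {s : Finset ι} {f : ι → M} {p : ι → Prop} [DecidablePred p]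
    (hf : ∀ i ∈ s, 0 ≤ f i) (h : ∑ i ∈ s, f i ≤ ∑ i ∈ s with p i, f i)
    {j : ι} (hj : j ∈ s) (hpj : ¬ p j) : f j = 0 := by
  rw [← sum_filter_add_sum_filter_not s p, add_le_iff_nonpos_right] at h
  have hnonneg : ∀ i ∈ s.filter (¬ p ·), 0 ≤ f i := fun i hi => hf i (mem_filter.mp hi).1
  exact (sum_eq_zero_iff_of_nonneg hnonneg).mp (le_antisymm h (sum_nonneg hnonneg)) j
    (mem_filter.mpr ⟨hj, hpj⟩)

theorem ENNReal.iInf_le_sum_ofReal_mul {ι : Type*} [Fintype ι] {s : Set ι} (F : ι → ℝ≥0∞)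
    {α : ι → ℝ} (hα : ∀ i, 0 ≤ α i) (hsum : ∑ i, α i = 1) (hs : ∀ i ∉ s, α i = 0) :
    ⨅ i ∈ s, F i ≤ ∑ i, ENNReal.ofReal (α i) * F i := by
  have hmass : ∑ i, ENNReal.ofReal (α i) = 1 := by
    rw [← ENNReal.ofReal_sum_of_nonneg fun i _ => hα i, hsum, ENNReal.ofReal_one]
  calc ⨅ i ∈ s, F i = ∑ i, ENNReal.ofReal (α i) * ⨅ j ∈ s, F j := by
        rw [← sum_mul, hmass, one_mul]
    _ ≤ ∑ i, ENNReal.ofReal (α i) * F i := by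
        refine sum_le_sum fun i _ => ?_
        by_cases hi : i ∈ s
        · exact mul_le_mul_right (iInf₂_le i hi) _
        · simp [hs i hi]

section

variable {V : Type*} [Fintype V] [DecidableEq V]

theorem thetaInfE_le_of_support_subset (F : Finset V → ℝ≥0∞) {w : V → ℝ} {S : Finset V}
    (hw : ∀ i, |w i| ≤ 1) (hwS : ∀ i ∉ S, w i = 0) : thetaInfE F w ≤ F S := by
  refine sInf_le ⟨Pi.single S 1, fun T => ?_, ?_, fun i => ?_, ?_⟩
  · by_cases hT : T = S <;> simp [hT]
  · rw [Fintype.sum_eq_single S fun T hT => by simp [hT], Pi.single_eq_same]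
  · rw [Fintype.sum_eq_single S fun T hT => by simp [hT], Pi.single_eq_same]
    by_cases hi : i ∈ S
    · simpa [hi] using hw i
    · simp [hi, hwS i hi]
  · rw [Fintype.sum_eq_single S fun T hT => by simp [hT]]
    simp

theorem eq_zero_of_not_subset_of_cover {A : Finset V} {α : Finset V → ℝ} (hα : ∀ S, 0 ≤ α S)
    (hsum : ∑ S, α S = 1) (hcover : ∀ i ∈ A, 1 ≤ ∑ S, if i ∈ S then α S else 0)
    {S : Finset V} (hS : ¬ A ⊆ S) : α S = 0 := by
  obtain ⟨i, hiA, hiS⟩ := not_subset.mp hS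
  refine eq_zero_of_sum_le_sum_filter (p := (i ∈ ·)) (fun T _ => hα T) ?_ (mem_univ S) hiS
  rw [hsum, sum_filter]
  exact hcover i hiA

end

theorem stmt_2_general {V : Type*} [Fintype V] [DecidableEq V]
    (F : Finset V → ℝ≥0∞) (A : Finset V) :
    thetaInfE F (fun i => if i ∈ A then (1 : ℝ) else 0) = ⨅ S ∈ {S : Finset V | A ⊆ S}, F S := by
  apply le_antisymm
  · refine le_iInf₂ fun S (hS : A ⊆ S) => thetaInfE_le_of_support_subset F (fun i => ?_) ?_
    · split_ifs <;> simp
    · intro i hi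
      simp [mt (@hS i) hi]
  · refine le_sInf ?_
    rintro _ ⟨α, hα, hsum, hcover, rfl⟩
    refine ENNReal.iInf_le_sum_ofReal_mul F hα hsum fun S hS => ?_
    exact eq_zero_of_not_subset_of_cover hα hsum (fun i hi => by simpa [hi] using hcover i) hS

theorem stmt_2 {V : Type*} [Fintype V] [DecidableEq V]
    (F : Finset V → ℝ≥0∞) (hF0 : F ∅ = 0) (A : Finset V) :
    thetaInfE F (fun i => if i ∈ A then (1 : ℝ) else 0) = ⨅ S ∈ {S : Finset V | A ⊆ S}, F S :=
  stmt_2_general F A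
end

section
/- Let F : 2^V → ℝ be monotone (F(A) ≤ F(B) whenever A ⊆ B) and submodular (F(A) + F(B) ≥ F(A∪B) + F(A∩B) for all A, B ⊆ V) with F(∅) = 0. For w ∈ ℝ^V define Ω_∞(w) = inf{ Σ_{S⊆V} α_S F(S) : α_S ≥ 0, Σ_{S : i∈S} α_S ≥ |w_i| ∀i } and Θ_∞(w) = inf{ Σ_{S⊆V} α_S F(S) : α_S ≥ 0, Σ_{S⊆V} α_S = 1, Σ_{S : i∈S} α_S ≥ |w_i| ∀i }. Then for every w with ‖w‖_∞ ≤ 1, Ω_∞(w) = Θ_∞(w) = ∫_0^1 F({ i ∈ V : |w_i| ≥ t }) dt, i.e. the homogeneous and non-homogeneous convex envelopes coincide on the unit ℓ_∞-ball and equal the Lovász extension of F evaluated at |w|. -/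
open scoped BigOperators

/-- The homogeneous `ℓ∞`-relaxation `Ω_∞`. -/
noncomputable def omegaInf {V : Type*} [Fintype V] [DecidableEq V]
    (F : Finset V → ℝ) (w : V → ℝ) : ℝ :=
  sInf { t : ℝ | ∃ α : Finset V → ℝ,
    (∀ S, 0 ≤ α S) ∧
    (∀ i : V, |w i| ≤ ∑ S : Finset V, if i ∈ S then α S else 0) ∧
    t = ∑ S : Finset V, α S * F S }

/-!
For `x ≥ 0` write `f_M(x) = ∫₀^M F({x ≥ t}) dt`. Adding `a • 1_S` to `x` turns the superlevel set
`{x ≥ t}` into `{x ≥ t} ∪ ({x ≥ t - a} ∩ S)`, and submodularity applied to these two sets, followed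
by the shift `t ↦ t - a`, gives `f_M(x + a • 1_S) ≤ f_M(x) + a F(S)`. Iterating over the sets of
a cover `∑ α_S 1_S ≥ |w|` and using monotonicity, every feasible cost is at least `f_1(|w|)`.
Conversely, giving each `S` the length of `{t ∈ (0, 1] : {|w| ≥ t} = S}` as weight (layer-cake
decomposition) yields a cover of total mass `1` and cost exactly `f_1(|w|)` when `‖w‖_∞ ≤ 1`, so
both infima are attained at `f_1(|w|)`.
-/

open MeasureTheory Set

theorem integral_comp_eq_sum_measureReal_preimage {α ι E : Type*} [MeasurableSpace α]
    [Fintype ι] [NormedAddCommGroup E] [NormedSpace ℝ E] [CompleteSpace E]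
    {μ : Measure α} [IsFiniteMeasure μ] (φ : α → ι) (hφ : ∀ i, MeasurableSet (φ ⁻¹' {i}))
    (G : ι → E) : ∫ a, G (φ a) ∂μ = ∑ i, μ.real (φ ⁻¹' {i}) • G i := by
  have hsum : (fun a => G (φ a)) = fun a => ∑ i, (φ ⁻¹' {i}).indicator (fun _ => G i) a := by
    funext a
    rw [Finset.sum_eq_single_of_mem (f := fun i => (φ ⁻¹' {i}).indicator (fun _ => G i) a) (φ a)
      (Finset.mem_univ _) fun i _ hi => indicator_of_notMem (Ne.symm hi) _]
    exact (indicator_of_mem (mem_singleton _) _).symm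
  rw [hsum, integral_finsetSum _ fun i _ => (integrable_const (G i)).indicator (hφ i)]
  simp_rw [integral_indicator_const _ (hφ _)]

theorem intervalIntegral_comp_sub_le_of_antitone {g : ℝ → ℝ} (hg : Antitone g)
    (hg0 : ∀ t, 0 ≤ g t) (M : ℝ) {a : ℝ} (ha : 0 ≤ a) :
    ∫ t in 0..M, g (t - a) ≤ (∫ t in 0..M, g t) + a * g (-a) := by
  have hint : ∀ b c : ℝ, IntervalIntegrable g volume b c := fun _ _ => hg.intervalIntegrable
  have hhead : ∫ t in -a..0, g t ≤ a * g (-a) := by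
    calc ∫ t in -a..0, g t ≤ ∫ _ in -a..0, g (-a) :=
          intervalIntegral.integral_mono_on (by linarith) (hint _ _) intervalIntegrable_const
            fun t ht => hg ht.1
      _ = a * g (-a) := by simp
  have htail : 0 ≤ ∫ t in M - a..M, g t :=
    intervalIntegral.integral_nonneg (by linarith) fun t _ => hg0 t
  rw [intervalIntegral.integral_comp_sub_right, zero_sub,
    ← intervalIntegral.integral_add_adjacent_intervals (hint _ 0) (hint 0 _),
    ← intervalIntegral.integral_add_adjacent_intervals (hint 0 (M - a)) (hint _ M)]
  linarith

namespace LovaszExtension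

variable {V : Type*} [Fintype V]

noncomputable def superlevel (x : V → ℝ) (t : ℝ) : Finset V := {i | t ≤ x i}

@[simp]
theorem mem_superlevel {x : V → ℝ} {t : ℝ} {i : V} : i ∈ superlevel x t ↔ t ≤ x i := by
  simp [superlevel]

theorem superlevel_antitone (x : V → ℝ) : Antitone (superlevel x) :=
  fun _ _ hst _ hi => (mem_superlevel.1 hi).trans' hst |> mem_superlevel.2

theorem superlevel_mono {x y : V → ℝ} (hxy : x ≤ y) (t : ℝ) : superlevel x t ⊆ superlevel y t :=
  fun i hi => mem_superlevel.2 ((mem_superlevel.1 hi).trans (hxy i))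

theorem superlevel_eq_univ {x : V → ℝ} {t : ℝ} (h : ∀ i, t ≤ x i) : superlevel x t = .univ :=
  Finset.eq_univ_of_forall fun i => mem_superlevel.2 (h i)

theorem superlevel_eq_empty {x : V → ℝ} {t : ℝ} (h : ∀ i, x i < t) : superlevel x t = ∅ :=
  Finset.eq_empty_of_forall_notMem fun i hi => (mem_superlevel.1 hi).not_gt (h i)

theorem measurableSet_superlevel_preimage (x : V → ℝ) (S : Finset V) :
    MeasurableSet (superlevel x ⁻¹' {S}) :=
  (ordConnected_singleton.preimage_anti (superlevel_antitone x)).measurableSet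

theorem antitone_comp_superlevel {F : Finset V → ℝ} (hmono : Monotone F) (x : V → ℝ) :
    Antitone fun t => F (superlevel x t) :=
  hmono.comp_antitone (superlevel_antitone x)

noncomputable def layerWeight (x : V → ℝ) (S : Finset V) : ℝ :=
  (volume.restrict (Ioc (0 : ℝ) 1)).real (superlevel x ⁻¹' {S})

theorem sum_layerWeight (x : V → ℝ) : ∑ S, layerWeight x S = 1 := by
  unfold layerWeight
  rw [sum_measureReal_preimage_singleton _ fun S _ => measurableSet_superlevel_preimage x S,
    Finset.coe_univ, preimage_univ, measureReal_restrict_apply_univ, Real.volume_real_Ioc]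
  norm_num

theorem sum_layerWeight_mul (x : V → ℝ) (G : Finset V → ℝ) :
    ∑ S, layerWeight x S * G S = ∫ t in 0..1, G (superlevel x t) := by
  rw [intervalIntegral.integral_of_le zero_le_one,
    integral_comp_eq_sum_measureReal_preimage _ (measurableSet_superlevel_preimage x)]
  rfl

variable [DecidableEq V]

theorem superlevel_add_indicator (x : V → ℝ) (S : Finset V) {a : ℝ} (ha : 0 ≤ a) (t : ℝ) :
    superlevel (fun i => x i + if i ∈ S then a else 0) t
      = superlevel x t ∪ (superlevel x (t - a) ∩ S) := by
  ext i
  by_cases hi : i ∈ S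
  · simp only [hi, if_true, mem_superlevel, Finset.mem_union, Finset.mem_inter, and_true]
    constructor
    · intro h; right; linarith
    · rintro (h | h) <;> linarith
  · simp [hi]

theorem sum_layerWeight_of_mem (x : V → ℝ) {i : V} (hx0 : 0 ≤ x i) (hx1 : x i ≤ 1) :
    ∑ S, (if i ∈ S then layerWeight x S else 0) = x i := by
  have hpre : superlevel x ⁻¹' ↑({S | i ∈ S} : Finset (Finset V)) = Iic (x i) := by
    ext t; simp
  rw [← Finset.sum_filter]
  unfold layerWeight
  rw [sum_measureReal_preimage_singleton _ fun S _ => measurableSet_superlevel_preimage x S, hpre,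
    measureReal_restrict_apply measurableSet_Iic, Iic_inter_Ioc_of_le hx1, Real.volume_real_Ioc]
  simp [hx0]

section Submodular

variable {F : Finset V → ℝ} (hF0 : F ∅ = 0) (hmono : Monotone F)
  (hsub : ∀ A B : Finset V, F (A ∪ B) + F (A ∩ B) ≤ F A + F B)

include hmono

theorem antitone_comp_superlevel_inter (x : V → ℝ) (S : Finset V) :
    Antitone fun t => F (superlevel x t ∩ S) :=
  fun _ _ hst => hmono (Finset.inter_subset_inter_right (superlevel_antitone x hst))

include hF0 hsub in
theorem integral_superlevel_add_indicator_le {M : ℝ} (hM : 0 ≤ M) {x : V → ℝ}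
    (hx : ∀ i, 0 ≤ x i) (S : Finset V) {a : ℝ} (ha : 0 ≤ a) :
    ∫ t in 0..M, F (superlevel (fun i => x i + if i ∈ S then a else 0) t)
      ≤ (∫ t in 0..M, F (superlevel x t)) + a * F S := by
  set g : ℝ → ℝ := fun t => F (superlevel x t ∩ S)
  have hg : Antitone g := antitone_comp_superlevel_inter hmono x S
  have hgshift : Antitone fun t => g (t - a) := hg.comp_monotone fun _ _ h => by linarith
  have hFx := antitone_comp_superlevel hmono x
  have hpoint : ∀ t, F (superlevel (fun i => x i + if i ∈ S then a else 0) t)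
      ≤ F (superlevel x t) + (g (t - a) - g t) := by
    intro t
    have hcap : superlevel x t ∩ (superlevel x (t - a) ∩ S) = superlevel x t ∩ S := by
      rw [← Finset.inter_assoc, Finset.inter_eq_left.2 (superlevel_antitone x (by linarith))]
    have := hsub (superlevel x t) (superlevel x (t - a) ∩ S)
    rw [hcap] at this
    rw [superlevel_add_indicator x S ha]
    linarith
  have hga : g (-a) = F S := by
    simp only [g, superlevel_eq_univ fun i => (neg_nonpos.2 ha).trans (hx i), Finset.univ_inter]
  calc _ ≤ ∫ t in 0..M, (F (superlevel x t) + (g (t - a) - g t)) :=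
        intervalIntegral.integral_mono_on hM (antitone_comp_superlevel hmono _).intervalIntegrable
          (hFx.intervalIntegrable.add (hgshift.intervalIntegrable.sub hg.intervalIntegrable))
          fun t _ => hpoint t
    _ = (∫ t in 0..M, F (superlevel x t)) + ((∫ t in 0..M, g (t - a)) - ∫ t in 0..M, g t) := by
        rw [intervalIntegral.integral_add hFx.intervalIntegrable
          (hgshift.intervalIntegrable.sub hg.intervalIntegrable),
          intervalIntegral.integral_sub hgshift.intervalIntegrable hg.intervalIntegrable]
    _ ≤ _ := by
        have := intervalIntegral_comp_sub_le_of_antitone hg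
          (fun t => hF0 ▸ hmono (Finset.empty_subset _)) M ha
        rw [hga] at this
        linarith

include hF0 hsub in
theorem integral_superlevel_sum_le {M : ℝ} (hM : 0 ≤ M) (𝒮 : Finset (Finset V))
    {α : Finset V → ℝ} (hα : ∀ S, 0 ≤ α S) :
    ∫ t in 0..M, F (superlevel (fun i => ∑ S ∈ 𝒮, if i ∈ S then α S else 0) t)
      ≤ ∑ S ∈ 𝒮, α S * F S := by
  induction 𝒮 using Finset.induction_on with
  | empty =>
    have hzero : ∀ t ∈ uIoc 0 M, F (superlevel (fun _ : V => (0 : ℝ)) t) = 0 := fun t ht => by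
      rw [superlevel_eq_empty fun _ => ((uIoc_of_le hM) ▸ ht).1, hF0]
    simp [intervalIntegral.integral_congr_ae (ae_of_all _ hzero)]
  | @insert S 𝒮 hS ih =>
    have hx : ∀ i, 0 ≤ ∑ T ∈ 𝒮, if i ∈ T then α T else 0 :=
      fun i => Finset.sum_nonneg fun T _ => by split_ifs <;> simp [hα T]
    simp only [Finset.sum_insert hS, add_comm (ite _ _ _)]
    linarith [integral_superlevel_add_indicator_le hF0 hmono hsub hM hx S (hα S)]

include hF0 hsub in
theorem integral_superlevel_le_of_cover {M : ℝ} (hM : 0 ≤ M) {x : V → ℝ}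
    {α : Finset V → ℝ} (hα : ∀ S, 0 ≤ α S) (hx : ∀ i, x i ≤ ∑ S, if i ∈ S then α S else 0) :
    ∫ t in 0..M, F (superlevel x t) ≤ ∑ S, α S * F S :=
  calc _ ≤ ∫ t in 0..M, F (superlevel (fun i => ∑ S, if i ∈ S then α S else 0) t) :=
        intervalIntegral.integral_mono_on hM (antitone_comp_superlevel hmono x).intervalIntegrable
          (antitone_comp_superlevel hmono _).intervalIntegrable
          fun t _ => hmono (superlevel_mono hx t)
    _ ≤ _ := integral_superlevel_sum_le hF0 hmono hsub hM _ hα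

end Submodular

end LovaszExtension

open LovaszExtension in
theorem stmt_3 {V : Type*} [Fintype V] [DecidableEq V]
    (F : Finset V → ℝ) (hF0 : F ∅ = 0)
    (hmono : ∀ A B : Finset V, A ⊆ B → F A ≤ F B)
    (hsub : ∀ A B : Finset V, F (A ∪ B) + F (A ∩ B) ≤ F A + F B)
    (w : V → ℝ) (hw : ∀ i, |w i| ≤ 1) :
    (omegaInf F w = ∫ t in (0:ℝ)..1, F (Finset.univ.filter (fun i => t ≤ |w i|))) ∧
    (thetaInf F w = ∫ t in (0:ℝ)..1, F (Finset.univ.filter (fun i => t ≤ |w i|))) := by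
  have hmono' : Monotone F := fun A B h => hmono A B h
  have hlower : ∀ α : Finset V → ℝ, (∀ S, 0 ≤ α S) →
      (∀ i, |w i| ≤ ∑ S, if i ∈ S then α S else 0) →
      ∫ t in (0:ℝ)..1, F (superlevel (fun i => |w i|) t) ≤ ∑ S, α S * F S :=
    fun α hα hcover => integral_superlevel_le_of_cover hF0 hmono' hsub zero_le_one hα hcover
  have hweight_cover : ∀ i, |w i| ≤ ∑ S, if i ∈ S then layerWeight (fun j => |w j|) S else 0 :=
    fun i => (sum_layerWeight_of_mem (fun j => |w j|) (abs_nonneg (w i)) (hw i)).ge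
  have hcost := sum_layerWeight_mul (fun j => |w j|) F
  refine ⟨IsLeast.csInf_eq ⟨⟨_, fun S => measureReal_nonneg, hweight_cover, hcost.symm⟩, ?_⟩,
    IsLeast.csInf_eq ⟨⟨_, fun S => measureReal_nonneg, sum_layerWeight _, hweight_cover,
      hcost.symm⟩, ?_⟩⟩
  · rintro _ ⟨α, hα, hcover, rfl⟩
    exact hlower α hα hcover
  · rintro _ ⟨α, hα, -, hcover, rfl⟩
    exact hlower α hα hcover
end

section
/- Let L : ℝ^V → ℝ be differentiable and μ-strongly convex for some μ > 0, let Φ : ℝ^V → ℝ be convex, normalized (Φ(0) = 0), absolute (Φ(w) = Φ(|w|)) and monotone (|w| ≤ |w'| coordinatewise implies Φ(w) ≤ Φ(w')), and let λ > 0. For each z ∈ ℝ^V the function w ↦ L(w) − ⟨z, w⟩ + λ Φ(w) has a unique minimizer h(z). Then the set { z ∈ ℝ^V : Φ is not decomposable at h(z) with respect to supp(h(z)) } has Lebesgue measure zero; in particular, for Lebesgue-almost-every z the support of h(z) is weakly stable with respect to Φ. -/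
open scoped BigOperators
open MeasureTheory

/-- `Φ` is decomposable at `w` with respect to `J`. -/
def Decomposable {V : Type*} [Fintype V] (Φ : (V → ℝ) → ℝ) (w : V → ℝ) (J : Finset V) : Prop :=
  ∃ M : ℝ, 0 < M ∧ ∀ Δ : V → ℝ, (∀ i ∈ J, Δ i = 0) →
    Φ w + M * (⨆ i, |Δ i|) ≤ Φ (w + Δ)

/-- `J` is weakly stable with respect to `Φ`. -/
def WeaklyStable {V : Type*} [Fintype V] [DecidableEq V]
    (Φ : (V → ℝ) → ℝ) (J : Finset V) : Prop :=
  ∃ w : V → ℝ, Finset.univ.filter (fun i => w i ≠ 0) = J ∧ Decomposable Φ w J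

/-!
Strong convexity makes the minimiser map `h` strongly monotone,
`μ/2 ‖h z' - h z‖² ≤ ⟪z' - z, h z' - h z⟫`, hence Lipschitz. Optimality of `h z` and
differentiability of `L` make `(z - ∇L(h z)) / λ` a subgradient of `Φ` at `h z`; when this
subgradient has no zero coordinate off the support of `h z`, monotonicity of `Φ` turns the
subgradient inequality into decomposability. A bad `z` therefore lies in a critical set
`{z | h z i = 0 ∧ ∂ᵢL(h z) = z i}`. Along a line `z + t eᵢ`, all minimisers vanishing at `i`
coincide (the inner product above vanishes), so `z i = ∂ᵢL(h z)` pins down `t`: the translates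
of a critical set along `eᵢ` are pairwise disjoint, and only countably many of them can have
positive measure.
-/

open Set Filter Topology Function

theorem measure_eq_zero_of_add_smul_mem {E : Type*} [AddCommGroup E] [Module ℝ E]
    [MeasurableSpace E] [MeasurableAdd E] (μ : Measure E) [μ.IsAddLeftInvariant] [SFinite μ]
    {B : Set E} (hB : MeasurableSet B) (v : E)
    (hline : ∀ x ∈ B, ∀ t : ℝ, x + t • v ∈ B → t = 0) :
    μ B = 0 := by
  set A : ℝ → Set E := fun t => (fun x => t • v + x) ⁻¹' B
  have hdisj : Pairwise (Disjoint on A) := by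
    intro s t hst
    refine Set.disjoint_left.2 fun x hs ht => hst ?_
    have hts := hline _ hs (t - s) <| by
      simpa [A, sub_smul, add_assoc, add_comm, add_left_comm] using ht
    linarith
  have hcount := Measure.countable_meas_pos_of_disjoint_iUnion (μ := μ)
    (fun t => measurable_const_add (t • v) hB) hdisj
  simp only [measure_preimage_add] at hcount
  by_contra hB0
  exact Cardinal.not_countable_real (by simpa [pos_iff_ne_zero, hB0] using hcount)

section

variable {V : Type*} [Fintype V]

theorem continuous_of_sum_sq_sub_le {f : (V → ℝ) → V → ℝ} {C : ℝ}
    (hf : ∀ x y, ∑ i, (f x i - f y i) ^ 2 ≤ C * ∑ i, (x i - y i) ^ 2) : Continuous f := by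
  let g : EuclideanSpace ℝ V → EuclideanSpace ℝ V := fun x => WithLp.toLp 2 (f x.ofLp)
  have hdist : ∀ x y : EuclideanSpace ℝ V, dist x y = √(∑ i, (x i - y i) ^ 2) := fun x y => by
    simp [EuclideanSpace.dist_eq, Real.dist_eq, sq_abs]
  have hg : LipschitzWith (Real.toNNReal √C) g := LipschitzWith.of_dist_le' fun x y => by
    rw [hdist, hdist, ← Real.sqrt_mul' _ (Finset.sum_nonneg fun i _ => sq_nonneg _)]
    exact Real.sqrt_le_sqrt (hf _ _)
  exact (PiLp.continuous_ofLp 2 _).comp (hg.continuous.comp (PiLp.continuous_toLp 2 _))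

theorem ContinuousLinearMap.apply_eq_sum_mul_single [DecidableEq V] (ℓ : (V → ℝ) →L[ℝ] ℝ)
    (d : V → ℝ) : ℓ d = ∑ i, d i * ℓ (Pi.single i 1) := by
  conv_lhs => rw [← Finset.univ_sum_single d]
  simp only [map_sum]
  refine Finset.sum_congr rfl fun i _ => ?_
  rw [← smul_eq_mul, ← map_smul, ← Pi.single_smul, smul_eq_mul, mul_one]

def HasSubgradient (Φ : (V → ℝ) → ℝ) (u g : V → ℝ) : Prop :=
  ∀ w, Φ u + ∑ i, g i * (w i - u i) ≤ Φ w

theorem decomposable_of_hasSubgradient {Φ : (V → ℝ) → ℝ}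
    (hΦmono : ∀ w w' : V → ℝ, (∀ i, |w i| ≤ |w' i|) → Φ w ≤ Φ w') {u g : V → ℝ}
    (hg : HasSubgradient Φ u g) (hg0 : ∀ i, u i = 0 → g i ≠ 0) :
    Decomposable Φ u (Finset.univ.filter fun i => u i ≠ 0) := by
  have hsmall : ∀ i, ∀ᶠ M in 𝓝 (0 : ℝ), u i = 0 → M ≤ |g i| := fun i => by
    by_cases hi : u i = 0
    · filter_upwards [eventually_lt_nhds (abs_pos.2 (hg0 i hi))] with M hM _ using hM.le
    · exact Filter.Eventually.of_forall fun M h => absurd h hi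
  obtain ⟨M, hM, hM0⟩ := (((eventually_all.2 hsmall).filter_mono nhdsWithin_le_nhds).and
    (self_mem_nhdsWithin : ∀ᶠ M in 𝓝[>] (0 : ℝ), 0 < M)).exists
  refine ⟨M, hM0, fun Δ hΔ => ?_⟩
  have hΔu : ∀ i, Δ i ≠ 0 → u i = 0 := fun i hi => by
    by_contra h
    exact hi (hΔ i (by simpa using h))
  set Δ' : V → ℝ := fun i => SignType.sign (g i) * |Δ i|
  have hsup : ⨆ i, |Δ i| ≤ ∑ i, |Δ i| :=
    Real.iSup_le
      (fun i => Finset.single_le_sum (fun j _ => abs_nonneg (Δ j)) (Finset.mem_univ i))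
      (Finset.sum_nonneg fun i _ => abs_nonneg _)
  have hlin : M * ∑ i, |Δ i| ≤ ∑ i, g i * ((u + Δ') i - u i) := by
    rw [Finset.mul_sum]
    refine Finset.sum_le_sum fun i _ => ?_
    rw [Pi.add_apply, add_sub_cancel_left, ← mul_assoc, self_mul_sign]
    by_cases hi : Δ i = 0
    · simp [hi]
    · exact mul_le_mul_of_nonneg_right (hM i (hΔu i hi)) (abs_nonneg _)
  have hmono : Φ (u + Δ') ≤ Φ (u + Δ) := hΦmono _ _ fun i => by
    by_cases hi : Δ i = 0
    · simp [Δ', hi]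
    · simp only [Pi.add_apply, Δ', hΔu i hi, zero_add, abs_mul, abs_abs]
      exact mul_le_of_le_one_left (abs_nonneg _) (by cases SignType.sign (g i) <;> simp)
  calc Φ u + M * ⨆ i, |Δ i| ≤ Φ u + ∑ i, g i * ((u + Δ') i - u i) := by
        gcongr
        exact (mul_le_mul_of_nonneg_left hsup hM0.le).trans hlin
    _ ≤ Φ (u + Δ') := hg _
    _ ≤ Φ (u + Δ) := hmono

def regObjective (L Φ : (V → ℝ) → ℝ) (lam : ℝ) (z w : V → ℝ) : ℝ :=
  L w - ∑ i, z i * w i + lam * Φ w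

section Minimizers

variable {L Φ : (V → ℝ) → ℝ} {μ lam : ℝ}

-- Strong convexity is only used at the midpoint, which costs a factor `2` in the constant.
theorem regObjective_add_sum_sq_le_of_isMinOn
    (hLsc : ConvexOn ℝ univ fun w : V → ℝ => L w - μ / 2 * ∑ i, w i ^ 2)
    (hΦ : ConvexOn ℝ univ Φ) (hlam : 0 ≤ lam) {z u : V → ℝ}
    (hu : IsMinOn (regObjective L Φ lam z) univ u) (w : V → ℝ) :
    regObjective L Φ lam z u + μ / 4 * ∑ i, (w i - u i) ^ 2 ≤ regObjective L Φ lam z w := by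
  set m : V → ℝ := (1 / 2 : ℝ) • u + (1 / 2 : ℝ) • w
  have hLm := hLsc.2 (mem_univ u) (mem_univ w) (by norm_num : (0 : ℝ) ≤ 1 / 2)
    (by norm_num : (0 : ℝ) ≤ 1 / 2) (by norm_num)
  have hΦm := hΦ.2 (mem_univ u) (mem_univ w) (by norm_num : (0 : ℝ) ≤ 1 / 2)
    (by norm_num : (0 : ℝ) ≤ 1 / 2) (by norm_num)
  have hsq : ∑ i, m i ^ 2
      = (∑ i, u i ^ 2 + ∑ i, w i ^ 2) / 2 - (∑ i, (w i - u i) ^ 2) / 4 := by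
    simp only [Finset.sum_div, ← Finset.sum_add_distrib, ← Finset.sum_sub_distrib]
    refine Finset.sum_congr rfl fun i _ => ?_
    simp only [m, Pi.add_apply, Pi.smul_apply, smul_eq_mul]
    ring
  have hlin : ∑ i, z i * m i = (∑ i, z i * u i + ∑ i, z i * w i) / 2 := by
    simp only [Finset.sum_div, ← Finset.sum_add_distrib]
    refine Finset.sum_congr rfl fun i _ => ?_
    simp only [m, Pi.add_apply, Pi.smul_apply, smul_eq_mul]
    ring
  have hum := isMinOn_univ_iff.1 hu m
  simp only [regObjective, smul_eq_mul] at hLm hΦm hum ⊢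
  rw [hsq] at hLm
  rw [hlin] at hum
  nlinarith [mul_le_mul_of_nonneg_left hΦm hlam]

theorem half_mul_sum_sq_le_of_isMinOn
    (hLsc : ConvexOn ℝ univ fun w : V → ℝ => L w - μ / 2 * ∑ i, w i ^ 2)
    (hΦ : ConvexOn ℝ univ Φ) (hlam : 0 ≤ lam) {z z' u u' : V → ℝ}
    (hu : IsMinOn (regObjective L Φ lam z) univ u)
    (hu' : IsMinOn (regObjective L Φ lam z') univ u') :
    μ / 2 * ∑ i, (u' i - u i) ^ 2 ≤ ∑ i, (z' i - z i) * (u' i - u i) := by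
  have hgrowth := regObjective_add_sum_sq_le_of_isMinOn hLsc hΦ hlam hu u'
  have hgrowth' := regObjective_add_sum_sq_le_of_isMinOn hLsc hΦ hlam hu' u
  have hsymm : ∑ i, (u i - u' i) ^ 2 = ∑ i, (u' i - u i) ^ 2 :=
    Finset.sum_congr rfl fun i _ => by ring
  have hexp : ∑ i, (z' i - z i) * (u' i - u i)
      = (∑ i, z' i * u' i - ∑ i, z' i * u i) - (∑ i, z i * u' i - ∑ i, z i * u i) := by
    simp only [← Finset.sum_sub_distrib]
    exact Finset.sum_congr rfl fun i _ => by ring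
  rw [hsymm] at hgrowth'
  simp only [regObjective] at hgrowth hgrowth'
  linarith

theorem sum_sq_sub_le_of_isMinOn (hμ : 0 < μ)
    (hLsc : ConvexOn ℝ univ fun w : V → ℝ => L w - μ / 2 * ∑ i, w i ^ 2)
    (hΦ : ConvexOn ℝ univ Φ) (hlam : 0 ≤ lam) {z z' u u' : V → ℝ}
    (hu : IsMinOn (regObjective L Φ lam z) univ u)
    (hu' : IsMinOn (regObjective L Φ lam z') univ u') :
    ∑ i, (u' i - u i) ^ 2 ≤ 4 / μ ^ 2 * ∑ i, (z' i - z i) ^ 2 := by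
  have hmono := half_mul_sum_sq_le_of_isMinOn hLsc hΦ hlam hu hu'
  have hCS :=
    Finset.sum_mul_sq_le_sq_mul_sq Finset.univ (fun i => z' i - z i) (fun i => u' i - u i)
  set D := ∑ i, (u' i - u i) ^ 2
  set S := ∑ i, (z' i - z i) ^ 2
  have hD : 0 ≤ D := Finset.sum_nonneg fun i _ => sq_nonneg _
  have hS : 0 ≤ S := Finset.sum_nonneg fun i _ => sq_nonneg _
  have hsq : (μ / 2 * D) ^ 2 ≤ S * D := (pow_le_pow_left₀ (by positivity) hmono 2).trans hCS
  rw [div_mul_eq_mul_div, le_div_iff₀ (by positivity)]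
  rcases hD.eq_or_lt with h0 | hpos
  · rw [← h0]; linarith
  · nlinarith

theorem eq_of_isMinOn_of_eq_off (hμ : 0 < μ)
    (hLsc : ConvexOn ℝ univ fun w : V → ℝ => L w - μ / 2 * ∑ i, w i ^ 2)
    (hΦ : ConvexOn ℝ univ Φ) (hlam : 0 ≤ lam) {z z' u u' : V → ℝ} {i : V}
    (hu : IsMinOn (regObjective L Φ lam z) univ u)
    (hu' : IsMinOn (regObjective L Φ lam z') univ u')
    (hzz' : ∀ j, j ≠ i → z j = z' j) (hi : u i = 0) (hi' : u' i = 0) : u = u' := by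
  have hmono := half_mul_sum_sq_le_of_isMinOn hLsc hΦ hlam hu hu'
  have hinner : ∑ j, (z' j - z j) * (u' j - u j) = 0 :=
    Finset.sum_eq_zero fun j _ => by
      rcases eq_or_ne j i with rfl | hj
      · simp [hi, hi']
      · simp [hzz' j hj]
  have hsum : ∑ j, (u' j - u j) ^ 2 = 0 :=
    le_antisymm (by nlinarith) (Finset.sum_nonneg fun j _ => sq_nonneg _)
  funext j
  have := (Finset.sum_eq_zero_iff_of_nonneg fun j _ => sq_nonneg (u' j - u j)).1 hsum j
    (Finset.mem_univ j)
  linarith [pow_eq_zero_iff (n := 2) two_ne_zero |>.1 this]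

end Minimizers

theorem hasSubgradient_of_isMinOn_regObjective [DecidableEq V] {L Φ : (V → ℝ) → ℝ} {lam : ℝ}
    (hΦ : ConvexOn ℝ univ Φ) (hlam : 0 < lam) {z u : V → ℝ} (hLu : DifferentiableAt ℝ L u)
    (hu : IsMinOn (regObjective L Φ lam z) univ u) :
    HasSubgradient Φ u fun i => (z i - fderiv ℝ L u (Pi.single i 1)) / lam := by
  intro w
  beta_reduce
  set d := w - u
  set c := ∑ i, z i * d i - lam * (Φ w - Φ u)
  set φ : ℝ → ℝ := fun s => L (u + s • d) - s * c
  have hφmin : IsMinOn φ (Icc 0 1) 0 := by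
    rintro s ⟨hs0, hs1⟩
    have hseg : (1 - s) • u + s • w = u + s • d := by simp only [d]; module
    have hconv := hΦ.2 (mem_univ u) (mem_univ w) (sub_nonneg.2 hs1) hs0 (by ring)
    have hus := isMinOn_univ_iff.1 hu (u + s • d)
    have hlin : ∑ i, z i * (u + s • d) i = ∑ i, z i * u i + s * ∑ i, z i * d i := by
      simp only [Finset.mul_sum, ← Finset.sum_add_distrib]
      refine Finset.sum_congr rfl fun i _ => ?_
      simp only [Pi.add_apply, Pi.smul_apply, smul_eq_mul]
      ring
    rw [hseg, smul_eq_mul, smul_eq_mul] at hconv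
    simp only [regObjective, hlin] at hus
    show φ 0 ≤ φ s
    simp only [φ, c, zero_smul, add_zero, zero_mul, sub_zero]
    nlinarith [mul_le_mul_of_nonneg_left hconv hlam.le]
  have hφ : HasDerivAt φ (fderiv ℝ L u d - c) 0 := by
    have hline : HasDerivAt (fun s : ℝ => u + s • d) d 0 := by
      simpa using ((hasDerivAt_id (0 : ℝ)).smul_const d).const_add u
    have h := (hLu.hasFDerivAt.comp_hasDerivAt_of_eq 0 hline (by simp)).sub
      ((hasDerivAt_id' 0).mul_const c)
    rwa [one_mul] at h
  have hderiv : 0 ≤ fderiv ℝ L u d - c := by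
    simpa using hφmin.localize.hasFDerivWithinAt_nonneg hφ.hasFDerivAt.hasFDerivWithinAt
      (y := 1) (mem_posTangentConeAt_of_segment_subset (by simp [segment_eq_Icc]))
  have hsum : ∑ i, (z i - fderiv ℝ L u (Pi.single i 1)) / lam * (w i - u i)
      = (∑ i, z i * d i - fderiv ℝ L u d) / lam := by
    rw [ContinuousLinearMap.apply_eq_sum_mul_single, ← Finset.sum_sub_distrib, Finset.sum_div]
    exact Finset.sum_congr rfl fun i _ => by simp only [d, Pi.sub_apply]; ring
  rw [hsum, ← le_sub_iff_add_le', div_le_iff₀' hlam]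
  linarith

section CriticalSet

variable [DecidableEq V] {L Φ : (V → ℝ) → ℝ} {μ lam : ℝ} {h : (V → ℝ) → V → ℝ}

def criticalSet (L : (V → ℝ) → ℝ) (h : (V → ℝ) → V → ℝ) (i : V) : Set (V → ℝ) :=
  {z | h z i = 0 ∧ fderiv ℝ L (h z) (Pi.single i 1) = z i}

theorem setOf_not_decomposable_subset_iUnion_criticalSet (hLdiff : Differentiable ℝ L)
    (hΦ : ConvexOn ℝ univ Φ) (hΦmono : ∀ w w' : V → ℝ, (∀ i, |w i| ≤ |w' i|) → Φ w ≤ Φ w')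
    (hlam : 0 < lam) (hmin : ∀ z, IsMinOn (regObjective L Φ lam z) univ (h z)) :
    {z | ¬ Decomposable Φ (h z) (Finset.univ.filter fun i => h z i ≠ 0)} ⊆
      ⋃ i, criticalSet L h i := by
  intro z hz
  by_contra hcrit
  refine hz (decomposable_of_hasSubgradient hΦmono
    (hasSubgradient_of_isMinOn_regObjective hΦ hlam (hLdiff _) (hmin z)) fun i hi => ?_)
  refine div_ne_zero (sub_ne_zero.2 fun heq => hcrit ?_) hlam.ne'
  exact mem_iUnion.2 ⟨i, hi, heq.symm⟩

theorem volume_criticalSet_eq_zero (hμ : 0 < μ)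
    (hLsc : ConvexOn ℝ univ fun w : V → ℝ => L w - μ / 2 * ∑ i, w i ^ 2)
    (hΦ : ConvexOn ℝ univ Φ) (hlam : 0 ≤ lam)
    (hmin : ∀ z, IsMinOn (regObjective L Φ lam z) univ (h z)) (i : V) :
    volume (criticalSet L h i) = 0 := by
  have hcont : Continuous h := continuous_of_sum_sq_sub_le fun z z' =>
    sum_sq_sub_le_of_isMinOn hμ hLsc hΦ hlam (hmin z') (hmin z)
  have hmeas : MeasurableSet (criticalSet L h i) :=
    (measurableSet_eq_fun ((continuous_apply i).comp hcont).measurable measurable_const).inter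
      (measurableSet_eq_fun ((measurable_fderiv_apply_const ℝ L _).comp hcont.measurable)
        (measurable_pi_apply i))
  refine measure_eq_zero_of_add_smul_mem volume hmeas (Pi.single i 1) fun z hz t hzt => ?_
  have hoff : ∀ j, j ≠ i → z j = (z + t • Pi.single i 1 : V → ℝ) j := fun j hj => by
    simp [hj]
  have heq := eq_of_isMinOn_of_eq_off hμ hLsc hΦ hlam (hmin z) (hmin _) hoff hz.1 hzt.1
  have hzi := hzt.2
  rw [← heq, hz.2] at hzi
  simpa using hzi

end CriticalSet

end

theorem stmt_4_general {V : Type*} [Fintype V] [DecidableEq V]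
    (L : (V → ℝ) → ℝ) (μ : ℝ) (hμ : 0 < μ)
    (hLdiff : Differentiable ℝ L)
    (hLsc : ConvexOn ℝ Set.univ (fun w : V → ℝ => L w - (μ / 2) * ∑ i, (w i) ^ 2))
    (Φ : (V → ℝ) → ℝ) (hΦ : ConvexOn ℝ Set.univ Φ)
    (hΦmono : ∀ w w' : V → ℝ, (∀ i, |w i| ≤ |w' i|) → Φ w ≤ Φ w')
    (lam : ℝ) (hlam : 0 < lam)
    (h : (V → ℝ) → (V → ℝ))
    (hmin : ∀ z w : V → ℝ,
      L (h z) - (∑ i, z i * h z i) + lam * Φ (h z) ≤ L w - (∑ i, z i * w i) + lam * Φ w) :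
    volume { z : V → ℝ |
        ¬ Decomposable Φ (h z) (Finset.univ.filter (fun i => h z i ≠ 0)) } = 0 ∧
    ∀ᵐ z : V → ℝ, WeaklyStable Φ (Finset.univ.filter (fun i => h z i ≠ 0)) := by
  have hminOn : ∀ z, IsMinOn (regObjective L Φ lam z) univ (h z) := fun z =>
    isMinOn_univ_iff.2 (hmin z)
  have hnull : volume {z : V → ℝ |
      ¬ Decomposable Φ (h z) (Finset.univ.filter (fun i => h z i ≠ 0))} = 0 :=
    measure_mono_null
      (setOf_not_decomposable_subset_iUnion_criticalSet hLdiff hΦ hΦmono hlam hminOn)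
      (measure_iUnion_null (volume_criticalSet_eq_zero hμ hLsc hΦ hlam.le hminOn))
  exact ⟨hnull, ae_iff.2 (measure_mono_null (fun z hz hdec => hz ⟨h z, rfl, hdec⟩) hnull)⟩

theorem stmt_4 {V : Type*} [Fintype V] [DecidableEq V]
    (L : (V → ℝ) → ℝ) (μ : ℝ) (hμ : 0 < μ)
    (hLdiff : Differentiable ℝ L)
    (hLsc : ConvexOn ℝ Set.univ (fun w : V → ℝ => L w - (μ / 2) * ∑ i, (w i) ^ 2))
    (Φ : (V → ℝ) → ℝ) (hΦ : ConvexOn ℝ Set.univ Φ)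
    (hΦ0 : Φ 0 = 0) (hΦabs : ∀ w : V → ℝ, Φ w = Φ (fun i => |w i|))
    (hΦmono : ∀ w w' : V → ℝ, (∀ i, |w i| ≤ |w' i|) → Φ w ≤ Φ w')
    (lam : ℝ) (hlam : 0 < lam)
    (h : (V → ℝ) → (V → ℝ))
    (hmin : ∀ z w : V → ℝ,
      L (h z) - (∑ i, z i * h z i) + lam * Φ (h z) ≤ L w - (∑ i, z i * w i) + lam * Φ w)
    (huniq : ∀ z w : V → ℝ,
      (∀ w' : V → ℝ, L w - (∑ i, z i * w i) + lam * Φ w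
          ≤ L w' - (∑ i, z i * w' i) + lam * Φ w') → w = h z) :
    volume { z : V → ℝ |
        ¬ Decomposable Φ (h z) (Finset.univ.filter (fun i => h z i ≠ 0)) } = 0 ∧
    ∀ᵐ z : V → ℝ, WeaklyStable Φ (Finset.univ.filter (fun i => h z i ≠ 0)) :=
  stmt_4_general L μ hμ hLdiff hLsc Φ hΦ hΦmono lam hlam h hmin
end

section
/- Let Φ : ℝ^V → ℝ be convex, absolute (Φ(w) = Φ(|w|)) and monotone (|w| ≤ |w'| coordinatewise implies Φ(w) ≤ Φ(w')). Let J ⊆ V and w ∈ ℝ^V with supp(w) ⊆ J. If Φ is not decomposable at w with respect to J, then there exists i ∈ Jᶜ such that the i-th component of every subgradient of Φ at w is zero, i.e. every v ∈ ℝ^V satisfying Φ(u) ≥ Φ(w) + ⟨v, u − w⟩ for all u ∈ ℝ^V has v_i = 0. -/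
open scoped BigOperators

theorem stmt_6 {V : Type*} [Fintype V] [DecidableEq V]
    (Φ : (V → ℝ) → ℝ) (hΦ : ConvexOn ℝ Set.univ Φ)
    (hΦabs : ∀ w : V → ℝ, Φ w = Φ (fun i => |w i|))
    (hΦmono : ∀ w w' : V → ℝ, (∀ i, |w i| ≤ |w' i|) → Φ w ≤ Φ w')
    (J : Finset V) (w : V → ℝ) (hsupp : ∀ i, w i ≠ 0 → i ∈ J)
    (hnotdec : ¬ Decomposable Φ w J) :
    ∃ i ∉ J, ∀ v : V → ℝ,
      (∀ u : V → ℝ, Φ w + ∑ j, v j * (u j - w j) ≤ Φ u) → v i = 0 := by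
  classical
  by_contra h
  push_neg at h
  apply hnotdec
  choose! v hv hvi using h
  -- key estimate along a coordinate direction
  have key : ∀ i ∉ J, ∀ t : ℝ, 0 ≤ t →
      Φ w + |v i i| * t ≤ Φ (Function.update w i t) := by
    intro i hi t ht
    have hwi : w i = 0 := by
      by_contra h0; exact hi (hsupp i h0)
    have sum1 : ∀ s : ℝ, ∑ j, v i j * (Function.update w i s j - w j) = v i i * s := by
      intro s
      rw [Finset.sum_eq_single i]
      · simp [hwi]
      · intro b _ hb
        simp [Function.update_of_ne hb]
      · simp
    have h1 := hv i hi (Function.update w i t)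
    have h2 := hv i hi (Function.update w i (-t))
    rw [sum1] at h1
    rw [sum1] at h2
    have habs : Φ (Function.update w i (-t)) = Φ (Function.update w i t) := by
      rw [hΦabs (Function.update w i (-t)), hΦabs (Function.update w i t)]
      congr 1
      funext j
      by_cases hj : j = i
      · subst hj; simp
      · simp [Function.update_of_ne hj]
    rcases abs_cases (v i i) with ⟨he, _⟩ | ⟨he, _⟩
    · rw [he]; exact h1
    · rw [he, neg_mul, ← mul_neg]
      rw [habs] at h2
      exact h2
  by_cases hJc : ∃ i, i ∉ J
  · -- nonempty complement
    have hne : Nonempty V := ⟨hJc.choose⟩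
    set S : Finset V := Finset.univ.filter (fun i => i ∉ J) with hS
    have hSne : S.Nonempty := ⟨hJc.choose, by simp [hS, hJc.choose_spec]⟩
    set M : ℝ := S.inf' hSne (fun i => |v i i|) with hM
    have hMpos : 0 < M := by
      rw [hM, Finset.lt_inf'_iff]
      intro i hiS
      have : i ∉ J := by simpa [hS] using hiS
      exact abs_pos.mpr (hvi i this)
    refine ⟨M, hMpos, ?_⟩
    intro Δ hΔ
    obtain ⟨i0, hi0⟩ := Finite.exists_max (fun i => |Δ i|)
    have hbdd : BddAbove (Set.range fun i => |Δ i|) := Set.Finite.bddAbove (Set.finite_range _)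
    have htop : (⨆ i, |Δ i|) = |Δ i0| :=
      le_antisymm (ciSup_le hi0) (le_ciSup hbdd i0)
    by_cases hΔ0 : Δ i0 = 0
    · have hΔz : ∀ j, Δ j = 0 := fun j =>
        abs_eq_zero.mp (le_antisymm (by simpa [hΔ0] using hi0 j) (abs_nonneg _))
      have hwΔ : w + Δ = w := funext fun j => by simp [hΔz j]
      rw [htop, hΔ0, hwΔ]
      simp
    · have hi0J : i0 ∉ J := fun hmem => hΔ0 (hΔ i0 hmem)
      have hwi0 : w i0 = 0 := by
        by_contra h0; exact hi0J (hsupp i0 h0)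
      have hMle : M ≤ |v i0 i0| :=
        Finset.inf'_le _ (by simp [hS, hi0J])
      have ht : (0:ℝ) ≤ |Δ i0| := abs_nonneg _
      have step1 : Φ w + M * |Δ i0| ≤ Φ (Function.update w i0 |Δ i0|) :=
        le_trans (by nlinarith) (key i0 hi0J |Δ i0| ht)
      have step2 : Φ (Function.update w i0 |Δ i0|) ≤ Φ (w + Δ) := by
        apply hΦmono
        intro j
        by_cases hj : j = i0
        · subst hj
          simp [hwi0]
        · rw [Function.update_of_ne hj]
          by_cases hjJ : j ∈ J
          · simp [hΔ j hjJ]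
          · have : w j = 0 := by
              by_contra h0; exact hjJ (hsupp j h0)
            simp [this]
      rw [htop]
      exact le_trans step1 step2
  · -- complement empty
    push_neg at hJc
    refine ⟨1, one_pos, ?_⟩
    intro Δ hΔ
    have hΔz : ∀ j, Δ j = 0 := fun j => hΔ j (hJc j)
    have hwΔ : w + Δ = w := funext fun j => by simp [hΔz j]
    have hsup : (⨆ i, |Δ i|) = 0 := by
      rcases isEmpty_or_nonempty V with hV | hV
      · exact Real.iSup_of_isEmpty _
      · simp [hΔz]
    rw [hwΔ, hsup]
    simp
end

section
/- Let F : 2^V → ℝ be a finite-valued monotone set function (F(A) ≤ F(B) whenever A ⊆ B). Then the following are equivalent: (a) F is ρ-submodular for some ρ ∈ (0,1], i.e. there exists ρ ∈ (0,1] such that ρ (F(B ∪ {i}) − F(B)) ≤ F(A ∪ {i}) − F(A) for all A ⊆ B ⊆ V and all i ∈ Bᶜ; (b) every J ⊆ V that is weakly stable with respect to F is strongly stable with respect to F. -/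
open scoped BigOperators

private lemma extend_stable {V : Type*} [Fintype V] [DecidableEq V]
    (F : Finset V → ℝ) (hmono : ∀ A B : Finset V, A ⊆ B → F A ≤ F B) :
    ∀ n : ℕ, ∀ B : Finset V, (Finset.univ \ B).card ≤ n → ∀ i ∉ B,
      F B < F (insert i B) →
      ∃ J : Finset V, B ⊆ J ∧ i ∉ J ∧ ∀ j ∉ J, F J < F (insert j J) := by
  intro n
  induction n with
  | zero =>
    intro B hcard i hi _
    exfalso
    have : i ∈ Finset.univ \ B := Finset.mem_sdiff.2 ⟨Finset.mem_univ i, hi⟩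
    have := Finset.card_pos.2 ⟨i, this⟩
    omega
  | succ n ih =>
    intro B hcard i hi hlt
    by_cases h : ∀ j ∉ B, F B < F (insert j B)
    · exact ⟨B, subset_rfl, hi, h⟩
    · push_neg at h
      obtain ⟨j, hj, hle⟩ := h
      have hji : j ≠ i := by
        rintro rfl
        exact absurd hlt (not_lt.2 hle)
      have heq : F (insert j B) = F B :=
        le_antisymm hle (hmono _ _ (Finset.subset_insert _ _))
      have hi' : i ∉ insert j B := by
        simp [Finset.mem_insert, hji.symm, hi]
      have hcard' : (Finset.univ \ insert j B).card ≤ n := by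
        have h1 : Finset.univ \ insert j B = (Finset.univ \ B).erase j := by
          ext x
          simp [Finset.mem_sdiff, Finset.mem_erase, Finset.mem_insert, and_comm,
            not_or]
        have h2 : j ∈ Finset.univ \ B := Finset.mem_sdiff.2 ⟨Finset.mem_univ j, hj⟩
        rw [h1, Finset.card_erase_of_mem h2]
        omega
      have hlt' : F (insert j B) < F (insert i (insert j B)) := by
        rw [heq]
        exact lt_of_lt_of_le hlt
          (hmono _ _ (Finset.insert_subset_insert _ (Finset.subset_insert _ _)))
      obtain ⟨J, hBJ, hiJ, hstab⟩ := ih (insert j B) hcard' i hi' hlt'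
      exact ⟨J, (Finset.subset_insert _ _).trans hBJ, hiJ, hstab⟩

theorem stmt_10 {V : Type*} [Fintype V] [DecidableEq V]
    (F : Finset V → ℝ) (hmono : ∀ A B : Finset V, A ⊆ B → F A ≤ F B) :
    (∃ ρ : ℝ, ρ ∈ Set.Ioc (0:ℝ) 1 ∧
      ∀ A B : Finset V, A ⊆ B → ∀ i ∉ B,
        ρ * (F (insert i B) - F B) ≤ F (insert i A) - F A) ↔
    (∀ J : Finset V, (∀ i ∉ J, F J < F (insert i J)) →
      ∀ A ⊆ J, ∀ i ∉ J, F A < F (insert i A)) := by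
  classical
  constructor
  · rintro ⟨ρ, ⟨hρ0, _⟩, hρ⟩ J hJ A hA i hi
    have h1 := hρ A J hA i hi
    have h2 := hJ i hi
    have h3 : 0 < ρ * (F (insert i J) - F J) := mul_pos hρ0 (by linarith)
    linarith
  · intro hb
    have hc : ∀ A B : Finset V, A ⊆ B → ∀ i ∉ B,
        F B < F (insert i B) → F A < F (insert i A) := by
      intro A B hAB i hi hlt
      obtain ⟨J, hBJ, hiJ, hstab⟩ :=
        extend_stable F hmono (Finset.univ \ B).card B le_rfl i hi hlt
      exact hb J hstab A (hAB.trans hBJ) i hiJ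
    set T : Finset (Finset V × Finset V × V) :=
      Finset.univ.filter
        (fun p => p.1 ⊆ p.2.1 ∧ p.2.2 ∉ p.2.1 ∧ F p.2.1 < F (insert p.2.2 p.2.1))
      with hT
    set r : Finset V × Finset V × V → ℝ :=
      fun p => (F (insert p.2.2 p.1) - F p.1) / (F (insert p.2.2 p.2.1) - F p.2.1)
      with hr
    set S : Finset ℝ := insert (1:ℝ) (T.image r) with hS
    have hSne : S.Nonempty := ⟨1, Finset.mem_insert_self _ _⟩
    have hpos : ∀ x ∈ S, 0 < x := by
      intro x hx
      rw [hS, Finset.mem_insert] at hx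
      rcases hx with rfl | hx
      · norm_num
      · obtain ⟨p, hp, rfl⟩ := Finset.mem_image.1 hx
        rw [hT, Finset.mem_filter] at hp
        obtain ⟨-, hsub, hnm, hlt⟩ := hp
        have hnum : F p.1 < F (insert p.2.2 p.1) := hc p.1 p.2.1 hsub p.2.2 hnm hlt
        exact div_pos (by linarith) (by linarith)
    refine ⟨S.min' hSne, ⟨hpos _ (S.min'_mem hSne), ?_⟩, ?_⟩
    · exact S.min'_le 1 (Finset.mem_insert_self _ _)
    · intro A B hAB i hi
      by_cases hd : F B < F (insert i B)
      · have hmem : (A, B, i) ∈ T := by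
          rw [hT, Finset.mem_filter]
          exact ⟨Finset.mem_univ _, hAB, hi, hd⟩
        have hle : S.min' hSne ≤ r (A, B, i) :=
          S.min'_le _ (Finset.mem_insert_of_mem (Finset.mem_image_of_mem r hmem))
        have hdpos : 0 < F (insert i B) - F B := by linarith
        rw [hr] at hle
        simp only at hle
        calc S.min' hSne * (F (insert i B) - F B)
            ≤ (F (insert i A) - F A) / (F (insert i B) - F B) *
              (F (insert i B) - F B) := by
              exact mul_le_mul_of_nonneg_right hle hdpos.le
          _ = F (insert i A) - F A := div_mul_cancel₀ _ (ne_of_gt hdpos)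
      · have heq : F (insert i B) = F B :=
          le_antisymm (not_lt.1 hd) (hmono _ _ (Finset.subset_insert _ _))
        have hA : F A ≤ F (insert i A) := hmono _ _ (Finset.subset_insert _ _)
        rw [heq]
        simp
        linarith
end

section
/- Fix p ∈ (1,∞) and let q = p/(p−1). Let F : 2^V → ℝ be monotone (F(A) ≤ F(B) whenever A ⊆ B) with F(∅) = 0, and define Ω_p(w) = sup{ Σ_{i∈V} κ_i^{1/q} |w_i| : κ ∈ ℝ^V, κ ≥ 0, Σ_{i∈A} κ_i ≤ F(A) for all A ⊆ V }. If J ⊆ V is strongly stable with respect to F, then J is strongly stable with respect to Ω_p: for every w ∈ ℝ^V with supp(w) ⊆ J there exists M > 0 such that Ω_p(w + Δ) ≥ Ω_p(w) + M‖Δ‖_∞ for all Δ ∈ ℝ^V with supp(Δ) ⊆ Jᶜ. -/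
open scoped BigOperators

/-- The homogeneous relaxation `Ω_p` in its support-function (dual) form. -/
noncomputable def omegaP {V : Type*} [Fintype V] [DecidableEq V]
    (F : Finset V → ℝ) (q : ℝ) (w : V → ℝ) : ℝ :=
  sSup { t : ℝ | ∃ κ : V → ℝ, (∀ i, 0 ≤ κ i) ∧
    (∀ A : Finset V, ∑ i ∈ A, κ i ≤ F A) ∧
    t = ∑ i : V, (κ i) ^ (1 / q) * |w i| }

theorem stmt_11 {V : Type*} [Fintype V] [DecidableEq V]
    (p : ℝ) (hp : 1 < p) (q : ℝ) (hq : q = p / (p - 1))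
    (F : Finset V → ℝ) (hF0 : F ∅ = 0)
    (hmono : ∀ A B : Finset V, A ⊆ B → F A ≤ F B)
    (J : Finset V)
    (hJ : ∀ A ⊆ J, ∀ i ∉ J, F A < F (insert i A)) :
    ∀ w : V → ℝ, (∀ i, w i ≠ 0 → i ∈ J) →
      ∃ M : ℝ, 0 < M ∧ ∀ Δ : V → ℝ, (∀ i ∈ J, Δ i = 0) →
        omegaP F q w + M * (⨆ i, |Δ i|) ≤ omegaP F q (w + Δ) := by
  intro w hw
  have hq0 : 0 < q := by
    rw [hq]; exact div_pos (by linarith) (by linarith)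
  have hqi : (0:ℝ) < 1 / q := by positivity
  have hqine : (1:ℝ) / q ≠ 0 := ne_of_gt hqi
  have hF0le : ∀ A : Finset V, 0 ≤ F A := fun A => hF0 ▸ hmono ∅ A (Finset.empty_subset A)
  have h0mem : ∀ u : V → ℝ, (0:ℝ) ∈ { t : ℝ | ∃ κ : V → ℝ, (∀ i, 0 ≤ κ i) ∧
      (∀ A : Finset V, ∑ i ∈ A, κ i ≤ F A) ∧
      t = ∑ i : V, (κ i) ^ (1 / q) * |u i| } := by
    intro u
    refine ⟨fun _ => 0, fun i => le_refl 0, fun A => by simpa using hF0le A, ?_⟩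
    symm
    apply Finset.sum_eq_zero
    intro i _
    rw [Real.zero_rpow hqine, zero_mul]
  have hbdd : ∀ u : V → ℝ, BddAbove { t : ℝ | ∃ κ : V → ℝ, (∀ i, 0 ≤ κ i) ∧
      (∀ A : Finset V, ∑ i ∈ A, κ i ≤ F A) ∧
      t = ∑ i : V, (κ i) ^ (1 / q) * |u i| } := by
    intro u
    refine ⟨∑ i : V, (F {i}) ^ (1/q) * |u i|, ?_⟩
    rintro t ⟨κ, hκ0, hκF, rfl⟩
    apply Finset.sum_le_sum
    intro i _
    have h1 : κ i ≤ F {i} := by simpa using hκF {i}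
    exact mul_le_mul_of_nonneg_right
      (Real.rpow_le_rpow (hκ0 i) h1 (le_of_lt hqi)) (abs_nonneg _)
  by_cases hJu : ∀ i : V, i ∈ J
  · refine ⟨1, one_pos, ?_⟩
    intro Δ hΔ
    have hΔ0 : ∀ i, Δ i = 0 := fun i => hΔ i (hJu i)
    have hwΔ : w + Δ = w := by funext i; simp [hΔ0]
    have hsup : (⨆ i, |Δ i|) = 0 := by
      rcases isEmpty_or_nonempty V with h | h
      · exact Real.iSup_of_isEmpty _
      · have h1 : ∀ i : V, |Δ i| = (0:ℝ) := fun i => by simp [hΔ0]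
        calc (⨆ i, |Δ i|) = ⨆ _i : V, (0:ℝ) := by simp only [h1]
        _ = 0 := ciSup_const
    rw [hwΔ, hsup]; simp
  · push_neg at hJu
    obtain ⟨j0, hj0⟩ := hJu
    have hj0c : j0 ∈ Jᶜ := Finset.mem_compl.mpr hj0
    have hTne : ((J.powerset ×ˢ Jᶜ).image
        (fun x : Finset V × V => F (insert x.2 x.1) - F x.1)).Nonempty :=
      ⟨F (insert j0 ∅) - F ∅, Finset.mem_image.mpr ⟨(∅, j0),
        Finset.mem_product.mpr ⟨Finset.mem_powerset.mpr (Finset.empty_subset J), hj0c⟩, rfl⟩⟩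
    set ε := ((J.powerset ×ˢ Jᶜ).image
        (fun x : Finset V × V => F (insert x.2 x.1) - F x.1)).min' hTne with hεdef
    have hεpos : 0 < ε := by
      have hm := Finset.min'_mem _ hTne
      rw [← hεdef] at hm
      obtain ⟨x, hx, hxe⟩ := Finset.mem_image.mp hm
      obtain ⟨hx1, hx2⟩ := Finset.mem_product.mp hx
      have h5 := hJ x.1 (Finset.mem_powerset.mp hx1) x.2 (Finset.mem_compl.mp hx2)
      have hxe' : F (insert x.2 x.1) - F x.1 = ε := hxe
      linarith
    have hεle : ∀ A ⊆ J, ∀ i ∉ J, ε ≤ F (insert i A) - F A := by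
      intro A hA i hi
      apply Finset.min'_le
      exact Finset.mem_image.mpr ⟨(A, i),
        Finset.mem_product.mpr ⟨Finset.mem_powerset.mpr hA, Finset.mem_compl.mpr hi⟩, rfl⟩
    refine ⟨ε ^ ((1:ℝ)/q), Real.rpow_pos_of_pos hεpos _, ?_⟩
    intro Δ hΔ
    obtain ⟨j, hjm, hjmax⟩ := Finset.exists_max_image Jᶜ (fun i => |Δ i|) ⟨j0, hj0c⟩
    have hjJ : j ∉ J := Finset.mem_compl.mp hjm
    have hwj : w j = 0 := by
      by_contra h; exact hjJ (hw j h)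
    have hsup : (⨆ i, |Δ i|) = |Δ j| := by
      have : Nonempty V := ⟨j⟩
      apply le_antisymm
      · apply ciSup_le
        intro i
        by_cases hi : i ∈ J
        · simp [hΔ i hi, abs_nonneg]
        · exact hjmax i (Finset.mem_compl.mpr hi)
      · exact le_ciSup (f := fun i => |Δ i|) (Set.Finite.bddAbove (Set.finite_range _)) j
    rw [hsup]
    rw [← le_sub_iff_add_le]
    simp only [omegaP]
    refine csSup_le ⟨0, h0mem w⟩ ?_
    rintro t ⟨κ, hκ0, hκF, rfl⟩
    rw [le_sub_iff_add_le]
    apply le_csSup (hbdd (w + Δ))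
    -- the modified certificate
    refine ⟨fun i => if i = j then ε else if i ∈ J then κ i else 0, ?_, ?_, ?_⟩
    · intro i
      dsimp only
      split_ifs
      · exact le_of_lt hεpos
      · exact hκ0 i
      · exact le_refl 0
    · intro A
      have hsum' : ∀ B : Finset V, (∑ i ∈ B, if i ∈ J then κ i else 0) ≤ F (B ∩ J) := by
        intro B
        rw [Finset.sum_ite_mem]
        exact hκF _
      by_cases hjA : j ∈ A
      · have h1 : (∑ i ∈ A, if i = j then ε else if i ∈ J then κ i else 0)
            = ε + ∑ i ∈ A.erase j, (if i ∈ J then κ i else 0) := by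
          rw [← Finset.add_sum_erase A _ hjA]
          simp only [if_pos rfl]
          congr 1
          apply Finset.sum_congr rfl
          intro i hi
          rw [if_neg (Finset.ne_of_mem_erase hi)]
        have hAe : (A.erase j) ∩ J = A ∩ J := by
          ext i
          simp only [Finset.mem_inter, Finset.mem_erase]
          constructor
          · rintro ⟨⟨_, hiA⟩, hiJ⟩; exact ⟨hiA, hiJ⟩
          · rintro ⟨hiA, hiJ⟩
            exact ⟨⟨fun h => hjJ (h ▸ hiJ), hiA⟩, hiJ⟩
        have h2 : (∑ i ∈ A.erase j, if i ∈ J then κ i else 0) ≤ F (A ∩ J) := by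
          have := hsum' (A.erase j)
          rwa [hAe] at this
        have h3 : ε ≤ F (insert j (A ∩ J)) - F (A ∩ J) :=
          hεle (A ∩ J) Finset.inter_subset_right j hjJ
        have h4 : F (insert j (A ∩ J)) ≤ F A :=
          hmono _ _ (Finset.insert_subset hjA Finset.inter_subset_left)
        rw [h1]; linarith
      · have h1 : (∑ i ∈ A, if i = j then ε else if i ∈ J then κ i else 0)
            = ∑ i ∈ A, (if i ∈ J then κ i else 0) := by
          apply Finset.sum_congr rfl
          intro i hi
          rw [if_neg (show i ≠ j from fun h => hjA (h ▸ hi))]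
        rw [h1]
        exact le_trans (hsum' A) (hmono _ _ Finset.inter_subset_left)
    · -- the value equality
      rw [← Finset.add_sum_erase Finset.univ
            (fun i => (κ i) ^ ((1:ℝ)/q) * |w i|) (Finset.mem_univ j),
          ← Finset.add_sum_erase Finset.univ
            (fun i => (if i = j then ε else if i ∈ J then κ i else 0) ^ ((1:ℝ)/q)
              * |(w + Δ) i|) (Finset.mem_univ j)]
      have hterm : ∀ i ∈ Finset.univ.erase j,
          (κ i) ^ ((1:ℝ)/q) * |w i|
            = (if i = j then ε else if i ∈ J then κ i else 0) ^ ((1:ℝ)/q) * |(w + Δ) i| := by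
        intro i hi
        rw [if_neg (Finset.ne_of_mem_erase hi)]
        by_cases hiJ : i ∈ J
        · rw [if_pos hiJ]
          simp [Pi.add_apply, hΔ i hiJ]
        · have hwi : w i = 0 := by by_contra h; exact hiJ (hw i h)
          rw [if_neg hiJ, hwi, Real.zero_rpow hqine]
          simp
      rw [Finset.sum_congr rfl hterm]
      have hjj : (if j = j then ε else if j ∈ J then κ j else 0) = ε := if_pos rfl
      rw [Pi.add_apply, hwj, zero_add, hjj, abs_zero, mul_zero, zero_add]
      ring
end

section
/- Let F : 2^V → [0,∞] be monotone (F(A) ≤ F(B) whenever A ⊆ B) with F(∅) = 0, and define Θ_∞ : ℝ^V → [0,∞] by Θ_∞(w) = inf{ Σ_{S⊆V} α_S F(S) : α_S ≥ 0, Σ_{S⊆V} α_S = 1, Σ_{S : i∈S} α_S ≥ |w_i| for all i ∈ V } (with inf ∅ = ∞). If J ⊆ V is strongly stable with respect to F, then J is strongly stable with respect to Θ_∞: for every w ∈ ℝ^V with supp(w) ⊆ J there exists M > 0 such that Θ_∞(w + Δ) ≥ Θ_∞(w) + M‖Δ‖_∞ (inequality in [0,∞]) for all Δ ∈ ℝ^V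 with supp(Δ) ⊆ Jᶜ. -/
open scoped BigOperators ENNReal

/-!
Strong stability of `J` gives a uniform gap `ε > 0` with `F (S ∩ J) + ε ≤ F S` for every
`S ⊄ J`. Given a feasible `α` for `w + Δ`, replacing each `S` by `S ∩ J` yields a feasible
weighting for `w`, and the mass `α` puts on sets `S ⊄ J` is at least `‖Δ‖_∞`, since every
coordinate outside `J` must be covered by such sets. Hence the cost of `α` exceeds `Θ_∞(w)`
by at least `ε ‖Δ‖_∞`.
-/

open Finset Filter Topology

theorem ENNReal.exists_pos_forall_add_le {ι : Type*} [Finite ι] {a b : ι → ℝ≥0∞}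
    (h : ∀ i, a i < b i) : ∃ ε : ℝ, 0 < ε ∧ ∀ i, a i + ENNReal.ofReal ε ≤ b i := by
  have hev : ∀ i, ∀ᶠ ε in 𝓝[>] (0 : ℝ), a i + ENNReal.ofReal ε ≤ b i := by
    intro i
    have hcont : Tendsto (fun ε : ℝ => a i + ENNReal.ofReal ε) (𝓝 0) (𝓝 (a i)) := by
      simpa using tendsto_const_nhds.add (ENNReal.continuous_ofReal.tendsto (0 : ℝ))
    exact nhdsWithin_le_nhds ((hcont.eventually (gt_mem_nhds (h i))).mono fun _ => le_of_lt)
  exact ((eventually_all.2 hev).and self_mem_nhdsWithin).exists.imp fun _ h => ⟨h.2, h.1⟩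

section StronglyStable

variable {V : Type*} [DecidableEq V] {F : Finset V → ℝ≥0∞} {J : Finset V}

theorem lt_of_not_subset_of_stronglyStable (hmono : ∀ A B : Finset V, A ⊆ B → F A ≤ F B)
    (hJ : ∀ A ⊆ J, ∀ i ∉ J, F A < F (insert i A)) {S : Finset V} (hS : ¬ S ⊆ J) :
    F (S ∩ J) < F S := by
  obtain ⟨i, hiS, hiJ⟩ := not_subset.mp hS
  exact (hJ _ inter_subset_right i hiJ).trans_le
    (hmono _ _ (insert_subset hiS inter_subset_left))

theorem exists_pos_add_le_of_stronglyStable [Fintype V] (hmono : ∀ A B : Finset V, A ⊆ B → F A ≤ F B)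
    (hJ : ∀ A ⊆ J, ∀ i ∉ J, F A < F (insert i A)) :
    ∃ ε : ℝ, 0 < ε ∧ ∀ S, ¬ S ⊆ J → F (S ∩ J) + ENNReal.ofReal ε ≤ F S := by
  obtain ⟨ε, hε, hgap⟩ := ENNReal.exists_pos_forall_add_le (ι := {S : Finset V // ¬ S ⊆ J})
    fun S => lt_of_not_subset_of_stronglyStable hmono hJ S.2
  exact ⟨ε, hε, fun S hS => hgap ⟨S, hS⟩⟩

end StronglyStable

section ThetaInf

variable {V : Type*} [Fintype V] [DecidableEq V]

theorem thetaInfE_le_sum_comp (F : Finset V → ℝ≥0∞) {w : V → ℝ} (g : Finset V → Finset V)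
    {α : Finset V → ℝ} (hα0 : ∀ S, 0 ≤ α S) (hα1 : ∑ S, α S = 1)
    (hcov : ∀ i, |w i| ≤ ∑ S, if i ∈ g S then α S else 0) :
    thetaInfE F w ≤ ∑ S, ENNReal.ofReal (α S) * F (g S) := by
  refine sInf_le ⟨fun T => ∑ S with g S = T, α S, fun T => sum_nonneg fun S _ => hα0 S,
    by rwa [sum_fiberwise], fun i => ?_, ?_⟩
  · calc |w i| ≤ ∑ S, if i ∈ g S then α S else 0 := hcov i
      _ = ∑ T, ∑ S with g S = T, if i ∈ g S then α S else 0 := (sum_fiberwise _ _ _).symm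
      _ = ∑ T, if i ∈ T then ∑ S with g S = T, α S else 0 := by
        refine sum_congr rfl fun T _ => ?_
        split_ifs with hiT
        · exact sum_congr rfl fun S hS => by rw [(mem_filter.mp hS).2, if_pos hiT]
        · exact sum_eq_zero fun S hS => by rw [(mem_filter.mp hS).2, if_neg hiT]
  · rw [← sum_fiberwise univ g fun S => ENNReal.ofReal (α S) * F (g S)]
    refine sum_congr rfl fun T _ => ?_
    rw [ENNReal.ofReal_sum_of_nonneg fun S _ => hα0 S, sum_mul]
    exact sum_congr rfl fun S hS => by rw [(mem_filter.mp hS).2]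

variable {J : Finset V} {w Δ : V → ℝ} {α : Finset V → ℝ}

theorem abs_le_sum_mem_inter (hw : ∀ i, w i ≠ 0 → i ∈ J) (hΔ : ∀ i ∈ J, Δ i = 0)
    (hα0 : ∀ S, 0 ≤ α S) (hcov : ∀ i, |(w + Δ) i| ≤ ∑ S, if i ∈ S then α S else 0) (i : V) :
    |w i| ≤ ∑ S, if i ∈ S ∩ J then α S else 0 := by
  by_cases hiJ : i ∈ J
  · simpa [hΔ i hiJ, hiJ] using hcov i
  · rw [not_imp_comm.mp (hw i) hiJ, abs_zero]
    exact sum_nonneg fun S _ => by split_ifs <;> simp [hα0 S]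

theorem iSup_abs_le_sum_not_subset (hw : ∀ i, w i ≠ 0 → i ∈ J) (hΔ : ∀ i ∈ J, Δ i = 0)
    (hα0 : ∀ S, 0 ≤ α S) (hcov : ∀ i, |(w + Δ) i| ≤ ∑ S, if i ∈ S then α S else 0) :
    ⨆ i, |Δ i| ≤ ∑ S, if S ⊆ J then 0 else α S := by
  have hsum_nonneg : 0 ≤ ∑ S, if S ⊆ J then 0 else α S :=
    sum_nonneg fun S _ => by split_ifs <;> simp [hα0 S]
  refine Real.iSup_le (fun i => ?_) hsum_nonneg
  by_cases hiJ : i ∈ J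
  · simpa [hΔ i hiJ] using hsum_nonneg
  · calc |Δ i| = |(w + Δ) i| := by simp [not_imp_comm.mp (hw i) hiJ]
      _ ≤ ∑ S, if i ∈ S then α S else 0 := hcov i
      _ ≤ ∑ S, if S ⊆ J then 0 else α S := sum_le_sum fun S _ => by
        by_cases hiS : i ∈ S
        · rw [if_pos hiS, if_neg fun h => hiJ (h hiS)]
        · split_ifs <;> simp [hα0 S]

end ThetaInf

theorem stmt_12_general {V : Type*} [Fintype V] [DecidableEq V]
    (F : Finset V → ℝ≥0∞)
    (hmono : ∀ A B : Finset V, A ⊆ B → F A ≤ F B)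
    (J : Finset V)
    (hJ : ∀ A ⊆ J, ∀ i ∉ J, F A < F (insert i A)) :
    ∀ w : V → ℝ, (∀ i, w i ≠ 0 → i ∈ J) →
      ∃ M : ℝ, 0 < M ∧ ∀ Δ : V → ℝ, (∀ i ∈ J, Δ i = 0) →
        thetaInfE F w + ENNReal.ofReal (M * (⨆ i, |Δ i|)) ≤ thetaInfE F (w + Δ) := by
  intro w hw
  obtain ⟨ε, hε, hgap⟩ := exists_pos_add_le_of_stronglyStable hmono hJ
  refine ⟨ε, hε, fun Δ hΔ => le_sInf ?_⟩
  rintro _ ⟨α, hα0, hα1, hcov, rfl⟩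
  have hextra : ENNReal.ofReal (ε * ⨆ i, |Δ i|)
      ≤ ∑ S, ENNReal.ofReal (if S ⊆ J then 0 else ε * α S) := by
    rw [← ENNReal.ofReal_sum_of_nonneg fun S _ => by split_ifs <;> positivity [hα0 S]]
    refine ENNReal.ofReal_le_ofReal ?_
    calc ε * ⨆ i, |Δ i| ≤ ε * ∑ S, if S ⊆ J then 0 else α S :=
          mul_le_mul_of_nonneg_left (iSup_abs_le_sum_not_subset hw hΔ hα0 hcov) hε.le
      _ = ∑ S, if S ⊆ J then 0 else ε * α S := by simp only [mul_sum, mul_ite, mul_zero]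
  calc thetaInfE F w + ENNReal.ofReal (ε * ⨆ i, |Δ i|)
      ≤ ∑ S, ENNReal.ofReal (α S) * F (S ∩ J)
        + ∑ S, ENNReal.ofReal (if S ⊆ J then 0 else ε * α S) :=
        add_le_add (thetaInfE_le_sum_comp F (· ∩ J) hα0 hα1
          (abs_le_sum_mem_inter hw hΔ hα0 hcov)) hextra
    _ ≤ ∑ S, ENNReal.ofReal (α S) * F S := by
      rw [← sum_add_distrib]
      refine sum_le_sum fun S _ => ?_
      split_ifs with hS
      · rw [inter_eq_left.mpr hS, ENNReal.ofReal_zero, add_zero]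
      · rw [ENNReal.ofReal_mul hε.le, mul_comm (ENNReal.ofReal ε), ← mul_add]
        gcongr
        exact hgap S hS

theorem stmt_12 {V : Type*} [Fintype V] [DecidableEq V]
    (F : Finset V → ℝ≥0∞) (hF0 : F ∅ = 0)
    (hmono : ∀ A B : Finset V, A ⊆ B → F A ≤ F B)
    (J : Finset V)
    (hJ : ∀ A ⊆ J, ∀ i ∉ J, F A < F (insert i A)) :
    ∀ w : V → ℝ, (∀ i, w i ≠ 0 → i ∈ J) →
      ∃ M : ℝ, 0 < M ∧ ∀ Δ : V → ℝ, (∀ i ∈ J, Δ i = 0) →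
        thetaInfE F w + ENNReal.ofReal (M * (⨆ i, |Δ i|)) ≤ thetaInfE F (w + Δ) :=
  stmt_12_general F hmono J hJ
end

section
/- Let F : 2^V → ℝ with F(∅) = 0 be ρ-submodular for some ρ ∈ (0,1], i.e. ρ (F(B ∪ {i}) − F(B)) ≤ F(A ∪ {i}) − F(A) for all A ⊆ B ⊆ V and i ∈ Bᶜ. Then F is weakly submodular: for all disjoint S, L ⊆ V with F(L ∪ S) − F(L) > 0, one has Σ_{i∈S} ( F(L ∪ {i}) − F(L) ) ≥ ρ ( F(L ∪ S) − F(L) ) > 0. -/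
open scoped BigOperators

theorem stmt_17 {V : Type*} [Fintype V] [DecidableEq V]
    (F : Finset V → ℝ) (hF0 : F ∅ = 0)
    (ρ : ℝ) (hρ : ρ ∈ Set.Ioc (0:ℝ) 1)
    (hρsub : ∀ A B : Finset V, A ⊆ B → ∀ i ∉ B,
      ρ * (F (insert i B) - F B) ≤ F (insert i A) - F A) :
    ∀ S L : Finset V, Disjoint S L → 0 < F (L ∪ S) - F L →
      ρ * (F (L ∪ S) - F L) ≤ (∑ i ∈ S, (F (insert i L) - F L)) ∧
      0 < ρ * (F (L ∪ S) - F L) := by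
  have key : ∀ S L : Finset V, Disjoint S L →
      ρ * (F (L ∪ S) - F L) ≤ (∑ i ∈ S, (F (insert i L) - F L)) := by
    intro S
    induction S using Finset.induction_on with
    | empty => intro L _; simp
    | @insert a S ha ih =>
      intro L hdisj
      have haL : a ∉ L := by
        intro h; exact (Finset.disjoint_left.mp hdisj (Finset.mem_insert_self a S)) h
      have hdisj' : Disjoint S L :=
        Finset.disjoint_left.mpr fun x hx hxL =>
          Finset.disjoint_left.mp hdisj (Finset.mem_insert_of_mem hx) hxL
      have haLS : a ∉ L ∪ S := by simp [haL, ha]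
      have h1 : ρ * (F (insert a (L ∪ S)) - F (L ∪ S)) ≤ F (insert a L) - F L :=
        hρsub L (L ∪ S) Finset.subset_union_left a haLS
      have heq : L ∪ insert a S = insert a (L ∪ S) := by
        ext x; simp [or_comm, or_left_comm]
      rw [heq, Finset.sum_insert ha]
      have h2 := ih L hdisj'
      nlinarith [h1, h2]
  intro S L hdisj hpos
  exact ⟨key S L hdisj, mul_pos hρ.1 hpos⟩
end

section
/- Let V = {1, …, d} with d ≥ 2 and define the range function on subsets of V by range(∅) = 0 and range(A) = max(A) − min(A) + 1 for nonempty A. Then the range function is 1/(d−1)-submodular: for all A ⊆ B ⊆ V and all i ∈ V \ B, (1/(d−1)) ( range(B ∪ {i}) − range(B) ) ≤ range(A ∪ {i}) − range(A). -/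
open scoped BigOperators

/-- The range function: `range(∅) = 0` and `range(A) = max(A) − min(A) + 1` otherwise. -/
noncomputable def rangeFn {d : ℕ} (A : Finset (Fin d)) : ℝ :=
  if h : A.Nonempty then ((A.max' h : ℕ) : ℝ) - ((A.min' h : ℕ) : ℝ) + 1 else 0

lemma rangeFn_eq {d : ℕ} (A : Finset (Fin d)) (h : A.Nonempty) :
    rangeFn A = ((A.max' h : ℕ) : ℝ) - ((A.min' h : ℕ) : ℝ) + 1 := by
  rw [rangeFn, dif_pos h]

lemma maxIns {d : ℕ} (i : Fin d) (B : Finset (Fin d)) (hB : B.Nonempty) :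
    (insert i B).max' (Finset.insert_nonempty i B) = B.max' hB ⊔ i := by
  apply le_antisymm
  · refine Finset.max'_le _ _ _ (fun y hy => ?_)
    rcases Finset.mem_insert.mp hy with rfl | hy
    · exact le_sup_right
    · exact le_sup_of_le_left (Finset.le_max' _ _ hy)
  · exact sup_le (Finset.le_max' _ _ (Finset.mem_insert_of_mem (B.max'_mem hB)))
      (Finset.le_max' _ _ (Finset.mem_insert_self i B))

lemma minIns {d : ℕ} (i : Fin d) (B : Finset (Fin d)) (hB : B.Nonempty) :
    (insert i B).min' (Finset.insert_nonempty i B) = B.min' hB ⊓ i := by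
  apply le_antisymm
  · exact le_inf (Finset.min'_le _ _ (Finset.mem_insert_of_mem (B.min'_mem hB)))
      (Finset.min'_le _ _ (Finset.mem_insert_self i B))
  · refine Finset.le_min' _ _ _ (fun y hy => ?_)
    rcases Finset.mem_insert.mp hy with rfl | hy
    · exact inf_le_right
    · exact inf_le_of_left_le (Finset.min'_le _ _ hy)

theorem stmt_18 {d : ℕ} (hd : 2 ≤ d) :
    ∀ A B : Finset (Fin d), A ⊆ B → ∀ i ∉ B,
      (1 / ((d : ℝ) - 1)) * (rangeFn (insert i B) - rangeFn B)
        ≤ rangeFn (insert i A) - rangeFn A := by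
  intro A B hAB i hiB
  have hd1 : (1:ℝ) ≤ (d:ℝ) - 1 := by
    have : (2:ℝ) ≤ (d:ℝ) := by exact_mod_cast hd
    linarith
  have hpos : (0:ℝ) < (d:ℝ) - 1 := by linarith
  have hfrac1 : (1:ℝ) / ((d:ℝ) - 1) ≤ 1 := by
    rw [div_le_one hpos]; linarith
  have hfrac0 : (0:ℝ) ≤ 1 / ((d:ℝ) - 1) := by positivity
  by_cases hA : A.Nonempty
  · have hB : B.Nonempty := hA.mono hAB
    have hriA := rangeFn_eq (insert i A) (Finset.insert_nonempty i A)
    have hriB := rangeFn_eq (insert i B) (Finset.insert_nonempty i B)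
    have hrA := rangeFn_eq A hA
    have hrB := rangeFn_eq B hB
    rw [maxIns i A hA, minIns i A hA] at hriA
    rw [maxIns i B hB, minIns i B hB] at hriB
    set Ma := A.max' hA with hMa
    set ma := A.min' hA with hma
    set Mb := B.max' hB with hMb
    set mb := B.min' hB with hmb
    have hMab : Ma ≤ Mb := Finset.max'_subset hA hAB
    have hmab : mb ≤ ma := Finset.min'_subset hA hAB
    have hmMa : ma ≤ Ma := Finset.min'_le A _ (A.max'_mem hA)
    have hmMb : mb ≤ Mb := Finset.min'_le B _ (B.max'_mem hB)
    -- cast inequalities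
    have cMab : ((Ma:ℕ):ℝ) ≤ ((Mb:ℕ):ℝ) := by exact_mod_cast hMab
    have cmab : ((mb:ℕ):ℝ) ≤ ((ma:ℕ):ℝ) := by exact_mod_cast hmab
    have cmMa : ((ma:ℕ):ℝ) ≤ ((Ma:ℕ):ℝ) := by exact_mod_cast hmMa
    rcases lt_trichotomy i mb with hlt | heq | hgt
    · -- i < mb : gain_B = mb - i, gain_A = ma - i
      have h1 : i ≤ Mb := le_trans hlt.le hmMb
      have h2 : i ≤ Ma := le_trans (le_trans hlt.le hmab) hmMa
      have h3 : i ≤ ma := le_trans hlt.le hmab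
      rw [sup_eq_left.mpr h1, inf_eq_right.mpr hlt.le] at hriB
      rw [sup_eq_left.mpr h2, inf_eq_right.mpr h3] at hriA
      rw [hriA, hriB, hrA, hrB]
      have ci : ((i:ℕ):ℝ) ≤ ((mb:ℕ):ℝ) := by exact_mod_cast hlt.le
      have key : (1:ℝ) / ((d:ℝ) - 1) * (((mb:ℕ):ℝ) - ((i:ℕ):ℝ)) ≤ ((mb:ℕ):ℝ) - ((i:ℕ):ℝ) := by
        nlinarith
      have : ((mb:ℕ):ℝ) - ((i:ℕ):ℝ) ≤ ((ma:ℕ):ℝ) - ((i:ℕ):ℝ) := by linarith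
      calc (1:ℝ) / ((d:ℝ) - 1) * ((((Mb:ℕ):ℝ) - ((i:ℕ):ℝ) + 1) - (((Mb:ℕ):ℝ) - ((mb:ℕ):ℝ) + 1))
          = (1:ℝ) / ((d:ℝ) - 1) * (((mb:ℕ):ℝ) - ((i:ℕ):ℝ)) := by ring_nf
        _ ≤ ((ma:ℕ):ℝ) - ((i:ℕ):ℝ) := by linarith
        _ = (((Ma:ℕ):ℝ) - ((i:ℕ):ℝ) + 1) - (((Ma:ℕ):ℝ) - ((ma:ℕ):ℝ) + 1) := by ring
    · refine absurd ?_ hiB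
      rw [heq]; exact B.min'_mem hB
    · -- mb < i
      rcases lt_trichotomy Mb i with hlt | heq | hgt2
      · -- Mb < i: gain_B = i - Mb, gain_A = i - Ma
        have h1 : Mb ≤ i := hlt.le
        have h2 : Ma ≤ i := le_trans hMab h1
        have h3 : mb ≤ i := hgt.le
        have h4 : ma ≤ i := le_trans hmMa h2
        rw [sup_eq_right.mpr h1, inf_eq_left.mpr h3] at hriB
        rw [sup_eq_right.mpr h2, inf_eq_left.mpr h4] at hriA
        rw [hriA, hriB, hrA, hrB]
        have ci : ((Mb:ℕ):ℝ) ≤ ((i:ℕ):ℝ) := by exact_mod_cast h1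
        have key : (1:ℝ) / ((d:ℝ) - 1) * (((i:ℕ):ℝ) - ((Mb:ℕ):ℝ)) ≤ ((i:ℕ):ℝ) - ((Mb:ℕ):ℝ) := by
          nlinarith
        calc (1:ℝ) / ((d:ℝ) - 1) * ((((i:ℕ):ℝ) - ((mb:ℕ):ℝ) + 1) - (((Mb:ℕ):ℝ) - ((mb:ℕ):ℝ) + 1))
            = (1:ℝ) / ((d:ℝ) - 1) * (((i:ℕ):ℝ) - ((Mb:ℕ):ℝ)) := by ring_nf
          _ ≤ ((i:ℕ):ℝ) - ((Ma:ℕ):ℝ) := by linarith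
          _ = (((i:ℕ):ℝ) - ((ma:ℕ):ℝ) + 1) - (((Ma:ℕ):ℝ) - ((ma:ℕ):ℝ) + 1) := by ring
      · refine absurd ?_ hiB
        rw [← heq]; exact B.max'_mem hB
      · -- mb < i < Mb : gain_B = 0, gain_A ≥ 0
        rw [sup_eq_left.mpr hgt2.le, inf_eq_left.mpr hgt.le] at hriB
        rw [hriA, hriB, hrA, hrB]
        have hsup : ((Ma:ℕ):ℝ) ≤ (((Ma ⊔ i :Fin d):ℕ):ℝ) := by
          exact_mod_cast (le_sup_left : Ma ≤ Ma ⊔ i)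
        have hinf : (((ma ⊓ i :Fin d):ℕ):ℝ) ≤ ((ma:ℕ):ℝ) := by
          exact_mod_cast (inf_le_left : ma ⊓ i ≤ ma)
        have : (1:ℝ) / ((d:ℝ) - 1) * ((((Mb:ℕ):ℝ) - ((mb:ℕ):ℝ) + 1) - (((Mb:ℕ):ℝ) - ((mb:ℕ):ℝ) + 1)) = 0 := by ring
        rw [this]
        linarith
  · -- A empty
    have hAe : A = ∅ := Finset.not_nonempty_iff_eq_empty.mp hA
    subst hAe
    have hri : rangeFn (insert i (∅ : Finset (Fin d))) = 1 := by
      rw [rangeFn_eq _ (Finset.insert_nonempty i ∅)]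
      simp
    have hre : rangeFn (∅ : Finset (Fin d)) = 0 := by rw [rangeFn, dif_neg]; simp
    rw [hri, hre]
    by_cases hB : B.Nonempty
    · have hriB := rangeFn_eq (insert i B) (Finset.insert_nonempty i B)
      have hrB := rangeFn_eq B hB
      rw [maxIns i B hB, minIns i B hB] at hriB
      set Mb := B.max' hB
      set mb := B.min' hB
      have hub : (((Mb ⊔ i : Fin d):ℕ):ℝ) ≤ (d:ℝ) - 1 := by
        have h1 : ((Mb ⊔ i : Fin d):ℕ) < d := (Mb ⊔ i).is_lt
        have : (((Mb ⊔ i : Fin d):ℕ):ℝ) + 1 ≤ (d:ℝ) := by exact_mod_cast Nat.succ_le_of_lt h1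
        linarith
      have hlb : (0:ℝ) ≤ (((mb ⊓ i : Fin d):ℕ):ℝ) := by positivity
      have hmM : ((mb:ℕ):ℝ) ≤ ((Mb:ℕ):ℝ) := by
        exact_mod_cast (Finset.min'_le B _ (B.max'_mem hB) : mb ≤ Mb)
      have hmm : (((mb ⊓ i : Fin d):ℕ):ℝ) ≤ ((mb:ℕ):ℝ) := by
        exact_mod_cast (inf_le_left : mb ⊓ i ≤ mb)
      have hMM : ((Mb:ℕ):ℝ) ≤ (((Mb ⊔ i : Fin d):ℕ):ℝ) := by
        exact_mod_cast (le_sup_left : Mb ≤ Mb ⊔ i)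
      rw [hriB, hrB]
      have hgain : rangeFn (insert i B) - rangeFn B ≤ (d:ℝ) - 1 := by
        rw [hriB, hrB]; linarith
      have hg0 : (0:ℝ) ≤ (((Mb ⊔ i : Fin d):ℕ):ℝ) - (((mb ⊓ i : Fin d):ℕ):ℝ) + 1 - (((Mb:ℕ):ℝ) - ((mb:ℕ):ℝ) + 1) := by linarith
      have hgle : (((Mb ⊔ i : Fin d):ℕ):ℝ) - (((mb ⊓ i : Fin d):ℕ):ℝ) + 1 - (((Mb:ℕ):ℝ) - ((mb:ℕ):ℝ) + 1) ≤ (d:ℝ) - 1 := by linarith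
      have hDD : 1/((d:ℝ)-1) * ((d:ℝ)-1) = 1 := by field_simp
      nlinarith [hDD, mul_le_mul_of_nonneg_left hgle hfrac0]
    · have hBe : B = ∅ := Finset.not_nonempty_iff_eq_empty.mp hB
      subst hBe
      rw [hri, hre]
      linarith
end

section
/- Define F : ℝ^d → ℝ by F(w) = (1/2)‖w‖₀ + (1/2)‖w‖₂², where ‖w‖₀ is the number of nonzero coordinates of w, and define the Berhu penalty Θ(w) = Σ_{i=1}^d θ(w_i), where θ(t) = |t| if |t| ≤ 1 and θ(t) = (t² + 1)/2 if |t| > 1. Then Θ is the convex envelope of F: (i) Θ is convex on ℝ^d; (ii) Θ(w) ≤ F(w) for all w ∈ ℝ^d; (iii) every convex function g : ℝ^d → ℝ with g(w) ≤ F(w) for all w satisfies g(w) ≤ Θ(w) for all w. -/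
open scoped BigOperators

/-!
Coordinatewise, the ℓ₀ + ℓ₂² penalty `l0l2Penalty t = ([t ≠ 0] + t²) / 2` has convex envelope
`berhu`: the two agree at `0` and on `|t| ≥ 1`, and on `[-1, 1]` `berhu` is the chord `|t|`
joining the values `0` at `0` and `1` at `±1`. In `ℝ^ι`, a convex minorant `g` of the
coordinatewise sum is handled one coordinate at a time: a coordinate `0 < |t| < 1` of `w` is
split as the convex combination `(1 - |t|) • 0 + |t| • (t / |t|)`, along which the sum of `berhu`
is affine, so the bound `g ≤ ∑ berhu` propagates from points with fewer such coordinates to `w`.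
-/

/-- The Berhu penalty in one coordinate. -/
noncomputable def berhu (t : ℝ) : ℝ := if |t| ≤ 1 then |t| else (t ^ 2 + 1) / 2

open Finset Function

noncomputable def l0l2Penalty (t : ℝ) : ℝ := ((if t = 0 then 0 else 1) + t ^ 2) / 2

lemma sum_l0l2Penalty {ι : Type*} [Fintype ι] (w : ι → ℝ) :
    ∑ i, l0l2Penalty (w i) = (1 / 2) * (#{i | w i ≠ 0} : ℝ) + (1 / 2) * ∑ i, w i ^ 2 := by
  rw [natCast_card_filter, mul_sum, mul_sum, ← sum_add_distrib]
  refine sum_congr rfl fun i _ => ?_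
  rcases eq_or_ne (w i) 0 with h | h
  · simp [l0l2Penalty, h]
  · simp only [l0l2Penalty, h, if_false, if_true, ne_eq, not_false_eq_true]
    ring

lemma abs_div_abs_self {t : ℝ} (ht : t ≠ 0) : |(t / |t|)| = 1 := by
  rw [abs_div, abs_abs, div_self (abs_ne_zero.2 ht)]

lemma berhu_of_abs_le_one {t : ℝ} (h : |t| ≤ 1) : berhu t = |t| := if_pos h

lemma berhu_of_one_lt_abs {t : ℝ} (h : 1 < |t|) : berhu t = (t ^ 2 + 1) / 2 := if_neg h.not_ge

lemma berhu_eq_abs_add_sq (t : ℝ) : berhu t = |t| + max (|t| - 1) 0 ^ 2 / 2 := by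
  rcases le_or_gt |t| 1 with h | h
  · rw [berhu_of_abs_le_one h, max_eq_right (by linarith)]
    ring
  · rw [berhu_of_one_lt_abs h, max_eq_left (by linarith), ← sq_abs t]
    ring

lemma convexOn_berhu : ConvexOn ℝ Set.univ berhu := by
  have habs : ConvexOn ℝ Set.univ (fun t : ℝ => |t|) := convexOn_univ_norm
  have hexcess := (habs.add_const (-1)).sup (convexOn_const 0 convex_univ)
  have hsq := (hexcess.pow (fun _ _ => le_max_right _ _) 2).smul (by norm_num : (0 : ℝ) ≤ 1 / 2)
  refine (habs.add hsq).congr fun t _ => ?_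
  simp only [Pi.add_apply, Pi.pow_apply, Pi.sup_apply, smul_eq_mul,
    berhu_eq_abs_add_sq, ← sub_eq_add_neg]
  ring

lemma berhu_le_l0l2Penalty (t : ℝ) : berhu t ≤ l0l2Penalty t := by
  rcases le_or_gt |t| 1 with h | h
  · rw [berhu_of_abs_le_one h, l0l2Penalty]
    split_ifs with ht
    · simp [ht]
    · nlinarith [sq_abs t, sq_nonneg (|t| - 1)]
  · have ht : t ≠ 0 := by rintro rfl; norm_num at h
    rw [berhu_of_one_lt_abs h, l0l2Penalty, if_neg ht]
    linarith

lemma berhu_eq_l0l2Penalty {t : ℝ} (h : t = 0 ∨ 1 ≤ |t|) : berhu t = l0l2Penalty t := by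
  rcases h with rfl | h
  · simp [berhu, l0l2Penalty]
  have ht : t ≠ 0 := by rintro rfl; norm_num at h
  rw [l0l2Penalty, if_neg ht]
  rcases h.eq_or_lt with h | h
  · rw [berhu_of_abs_le_one h.ge, ← h, ← sq_abs t, ← h]
    norm_num
  · rw [berhu_of_one_lt_abs h]
    ring

lemma convexOn_sum_apply {ι : Type*} [Fintype ι] {f : ℝ → ℝ} (hf : ConvexOn ℝ Set.univ f) :
    ConvexOn ℝ Set.univ (fun w : ι → ℝ => ∑ i, f (w i)) := by
  refine ⟨convex_univ, fun x _ y _ a b ha hb hab => ?_⟩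
  simp only [Pi.add_apply, Pi.smul_apply, smul_eq_mul, mul_sum, ← sum_add_distrib]
  exact sum_le_sum fun i _ => hf.2 trivial trivial ha hb hab

lemma sum_apply_update_add {ι : Type*} [Fintype ι] [DecidableEq ι] (f : ℝ → ℝ) (w : ι → ℝ)
    (a : ι) (v : ℝ) : ∑ i, f (update w a v i) + f (w a) = ∑ i, f (w i) + f v := by
  rw [sum_eq_add_sum_sdiff_singleton_of_mem (mem_univ a) (fun i => f (w i))]
  simp only [apply_update (fun _ => f), sum_update_of_mem (mem_univ a)]
  ring

lemma eq_smul_update_add_smul_update {ι : Type*} [DecidableEq ι] {w : ι → ℝ} {a : ι}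
    (ha : w a ≠ 0) : w = (1 - |w a|) • update w a 0 + |w a| • update w a (w a / |w a|) := by
  ext i
  rcases eq_or_ne i a with rfl | hi
  · simp [mul_div_cancel₀ _ (abs_ne_zero.2 ha)]
  · simp only [Pi.add_apply, Pi.smul_apply, update_of_ne hi, smul_eq_mul]
    ring

lemma ConvexOn.le_sum_berhu_of_update {ι : Type*} [Fintype ι] [DecidableEq ι]
    {g : (ι → ℝ) → ℝ} (hg : ConvexOn ℝ Set.univ g) {w : ι → ℝ} {a : ι} (ha₀ : w a ≠ 0)
    (ha₁ : |w a| ≤ 1) (h₀ : g (update w a 0) ≤ ∑ i, berhu (update w a 0 i))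
    (h₁ : g (update w a (w a / |w a|)) ≤ ∑ i, berhu (update w a (w a / |w a|) i)) :
    g w ≤ ∑ i, berhu (w i) := by
  have hc₀ : 0 < |w a| := abs_pos.2 ha₀
  have hΘ₀ := sum_apply_update_add berhu w a 0
  have hΘ₁ := sum_apply_update_add berhu w a (w a / |w a|)
  rw [berhu_of_abs_le_one ha₁, berhu_of_abs_le_one (by simp), abs_zero] at hΘ₀
  rw [berhu_of_abs_le_one ha₁, berhu_of_abs_le_one (abs_div_abs_self ha₀).le,
    abs_div_abs_self ha₀] at hΘ₁
  calc g w = g ((1 - |w a|) • update w a 0 + |w a| • update w a (w a / |w a|)) := by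
        rw [← eq_smul_update_add_smul_update ha₀]
    _ ≤ (1 - |w a|) * g (update w a 0) + |w a| * g (update w a (w a / |w a|)) :=
        hg.2 trivial trivial (by linarith) hc₀.le (by ring)
    _ ≤ (1 - |w a|) * ∑ i, berhu (update w a 0 i)
          + |w a| * ∑ i, berhu (update w a (w a / |w a|) i) := by
        gcongr
    _ = ∑ i, berhu (w i) := by linear_combination (1 - |w a|) * hΘ₀ + |w a| * hΘ₁

theorem ConvexOn.le_sum_berhu {ι : Type*} [Fintype ι] {g : (ι → ℝ) → ℝ}
    (hg : ConvexOn ℝ Set.univ g)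
    (htight : ∀ w : ι → ℝ, (∀ i, w i = 0 ∨ 1 ≤ |w i|) → g w ≤ ∑ i, berhu (w i)) (w : ι → ℝ) :
    g w ≤ ∑ i, berhu (w i) := by
  classical
  suffices ∀ s : Finset ι, ∀ w : ι → ℝ, (∀ i ∉ s, w i = 0 ∨ 1 ≤ |w i|) →
      g w ≤ ∑ i, berhu (w i) from
    this univ w fun i hi => absurd (mem_univ i) hi
  intro s
  induction s using Finset.induction_on with
  | empty => exact fun w hw => htight w fun i => hw i (notMem_empty i)
  | insert a s _ ih =>
    intro w hw
    have hupdate : ∀ v, (v = 0 ∨ 1 ≤ |v|) → g (update w a v) ≤ ∑ i, berhu (update w a v i) := by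
      refine fun v hv => ih _ fun i hi => ?_
      rcases eq_or_ne i a with rfl | hia
      · simpa using hv
      · simpa [update_of_ne hia] using hw i (by simp [hi, hia])
    by_cases hwa : w a = 0 ∨ 1 ≤ |w a|
    · simpa using hupdate (w a) hwa
    rw [not_or, not_le] at hwa
    exact hg.le_sum_berhu_of_update hwa.1 hwa.2.le (hupdate 0 (Or.inl rfl))
      (hupdate _ (Or.inr (abs_div_abs_self hwa.1).ge))

theorem stmt_19 {d : ℕ}
    (F : (Fin d → ℝ) → ℝ)
    (hF : ∀ w : Fin d → ℝ,
      F w = (1 / 2) * ((Finset.univ.filter (fun i => w i ≠ 0)).card : ℝ)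
          + (1 / 2) * ∑ i, (w i) ^ 2)
    (Θ : (Fin d → ℝ) → ℝ) (hΘ : ∀ w : Fin d → ℝ, Θ w = ∑ i, berhu (w i)) :
    ConvexOn ℝ Set.univ Θ ∧
    (∀ w : Fin d → ℝ, Θ w ≤ F w) ∧
    (∀ g : (Fin d → ℝ) → ℝ, ConvexOn ℝ Set.univ g → (∀ w, g w ≤ F w) →
      ∀ w, g w ≤ Θ w) := by
  obtain rfl : Θ = fun w => ∑ i, berhu (w i) := funext hΘ
  have hF' (w : Fin d → ℝ) : F w = ∑ i, l0l2Penalty (w i) := by rw [hF, sum_l0l2Penalty]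
  refine ⟨convexOn_sum_apply convexOn_berhu, fun w => ?_,
    fun g hg hgF => hg.le_sum_berhu fun w hw => ?_⟩
  · rw [hF']
    exact sum_le_sum fun i _ => berhu_le_l0l2Penalty (w i)
  · rw [sum_congr rfl fun i _ => berhu_eq_l0l2Penalty (hw i), ← hF']
    exact hgF w
end
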